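/- arXiv:1705.07196 — 5 statements merged into one kernel-verified Lean document; each statement's English description precedes it below -/
import Mathlib

section
/- Let μ and ν be nice functions on ℝ, let Pⁿ be a subfamily of the sub-spherical family P_μ^n, and let Pᵐ be a completely monotone subfamily of the sub-spherical family P_ν^m. Let A be an r×n matrix, B an r×m matrix, and Θ a positive definite r×r matrix such that Θ² ⪰ AAᵀ, Θ² ⪰ BBᵀ, and AAᵀ + BBᵀ ≻ 0. Let ξ = Θ⁻¹[Aη + Bζ], where η ∼ p ∈ Pⁿ and ζ ∼ q ∈ Pᵐ are independent, and let γ(s) = ∫_{−∞}^∞ μ(s−r)ν(r)dr be the convolution μ⋆ν. Then γ is nice; for every unit vector e ∈ ℝʳ and every δ ≥ 0, Prob{e·ξ ≥ δ} ≤ ∫_δ^∞ γ(s)ds; the scalar random variable e·ξ has a symmetric (even) density; and consequently the distribution of ξ belongs to the sub-spherical family P_γ^r. -/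
open MeasureTheory Matrix
open scoped Classical

noncomputable section

/-- `p` is a probability density on `ℝⁿ` (w.r.t. Lebesgue measure). -/
def IsDensity {n : ℕ} (p : (Fin n → ℝ) → ℝ) : Prop :=
  (∀ x, 0 ≤ p x) ∧ (∫ x, p x) = 1

/-- `p` is an even function on `ℝⁿ`. -/
def IsEvenFn {n : ℕ} (p : (Fin n → ℝ) → ℝ) : Prop := ∀ x, p (-x) = p x

/-- `γ` is a probability density on `ℝ`. -/
def IsDensity1 (γ : ℝ → ℝ) : Prop := (∀ s, 0 ≤ γ s) ∧ (∫ s, γ s) = 1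

/-- `γ` is an even probability density on `ℝ`, positive in a neighbourhood of `0`. -/
def IsSpec (γ : ℝ → ℝ) : Prop :=
  IsDensity1 γ ∧ (∀ s, γ (-s) = γ s) ∧ ∃ ε > 0, ∀ s, |s| < ε → 0 < γ s

/-- `P_γ(δ) = ∫_δ^∞ γ(s) ds`. -/
def tailP (γ : ℝ → ℝ) (δ : ℝ) : ℝ := ∫ s in Set.Ici δ, γ s

/-- Membership of the density `p` in the sub-spherical family `P_γ^n`. -/
def SubSpherical {n : ℕ} (γ : ℝ → ℝ) (p : (Fin n → ℝ) → ℝ) : Prop :=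
  IsDensity p ∧ IsEvenFn p ∧
  ∀ e : Fin n → ℝ, e ⬝ᵥ e = 1 → ∀ δ : ℝ, 0 ≤ δ →
    (∫ ξ in {ξ | δ ≤ e ⬝ᵥ ξ}, p ξ) ≤ tailP γ δ

/-- The measure on `ℝⁿ` with density `p` w.r.t. Lebesgue measure. -/
def dMeas {n : ℕ} (p : (Fin n → ℝ) → ℝ) : Measure (Fin n → ℝ) :=
  volume.withDensity fun x => ENNReal.ofReal (p x)

/-- The measure on `ℝ` with density `γ` w.r.t. Lebesgue measure. -/
def dMeas1 (γ : ℝ → ℝ) : Measure ℝ :=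
  volume.withDensity fun s => ENNReal.ofReal (γ s)

/-- A nice function: an even probability density on `ℝ`, continuous and nonincreasing on `[0,∞)`. -/
def Nice (f : ℝ → ℝ) : Prop :=
  IsDensity1 f ∧ (∀ s, f (-s) = f s) ∧ Continuous f ∧ AntitoneOn f (Set.Ici 0)

/-- `P` is a completely monotone subfamily of the sub-spherical family `P_γ^n`. -/
def CompMonotone {n : ℕ} (γ : ℝ → ℝ) (P : Set ((Fin n → ℝ) → ℝ)) : Prop :=
  Nice γ ∧ (∀ p ∈ P, SubSpherical γ p) ∧
  ∀ p ∈ P, ∀ e : Fin n → ℝ, e ⬝ᵥ e = 1 →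
    ∃ f : ℝ → ℝ, Nice f ∧ Measure.map (fun ξ => e ⬝ᵥ ξ) (dMeas p) = dMeas1 f

/-- Convolution of two functions on `ℝ`. -/
def convol (f g : ℝ → ℝ) : ℝ → ℝ := fun s => ∫ r, f (s - r) * g r

/-!
Write `e ⬝ᵥ ξ = X + Y` with `X = a ⬝ᵥ η` and `Y = b ⬝ᵥ ζ` independent, where `a = Aᵀ Θ⁻¹ e` and
`b = Bᵀ Θ⁻¹ e` have length at most `1` because `Θ² ⪰ AAᵀ, BBᵀ`. Thus `X` and `Y` are symmetric,
with tails beyond every `s > 0` dominated by those of `μ` and `ν`.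

For independent symmetric `X` and `Y`, `P(X + Y ≥ δ)` can only grow when `X` is replaced by a
symmetric variable with heavier tails, provided the law of `Y` puts less and less mass on the
window `(-x - δ, -x + δ)` as `|x|` grows; averaging over `±x`, this is a stochastic comparison of
`|X|` with its replacement. Laws with a nice density have this property for all `δ ≥ 0`, the
point mass at `0` for `δ > 0`. Replacing first `X` by `μ`, then `Y` by `ν`, gives
`P(e ⬝ᵥ ξ ≥ δ) ≤ P_{μ⋆ν}(δ)` for `δ > 0`; at `δ = 0` both sides are `1/2` by symmetry.

That `μ ⋆ ν` is again nice follows by pairing `t` with its reflection `s₁ + s₂ - t`. Finally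
`[A B]` is onto since `AAᵀ + BBᵀ ≻ 0`, so the law of `ξ` and its projections have densities,
which can be taken even by symmetrizing the Radon-Nikodym derivative.
-/

open Set
open scoped ENNReal

section Symmetry

variable {G : Type*} [MeasurableSpace G] [InvolutiveNeg G] [MeasurableNeg G]

lemma neg_withDensity_eq (μ : Measure G) [μ.IsNegInvariant] (f : G → ℝ≥0∞) :
    (μ.withDensity f).neg = μ.withDensity fun x => f (-x) := by
  refine Measure.ext fun s hs => ?_
  rw [Measure.neg_apply, withDensity_apply _ hs.neg, withDensity_apply _ hs,
    ← (Measure.measurePreserving_neg μ).setLIntegral_comp_preimage_emb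
      (MeasurableEquiv.neg G).measurableEmbedding f (-s), Set.neg_preimage, neg_neg]

lemma isNegInvariant_withDensity (μ : Measure G) [μ.IsNegInvariant] {f : G → ℝ≥0∞}
    (hf : ∀ x, f (-x) = f x) : (μ.withDensity f).IsNegInvariant :=
  ⟨by simp only [neg_withDensity_eq, hf]⟩

lemma isNegInvariant_map {H : Type*} [MeasurableSpace H] [InvolutiveNeg H] [MeasurableNeg H]
    (μ : Measure G) [μ.IsNegInvariant] {f : G → H} (hf : Measurable f)
    (hodd : ∀ x, f (-x) = -f x) : (μ.map f).IsNegInvariant := by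
  refine ⟨?_⟩
  rw [Measure.neg, Measure.map_map measurable_neg hf, show Neg.neg ∘ f = f ∘ Neg.neg from
    funext fun x => (hodd x).symm, ← Measure.map_map hf measurable_neg, Measure.map_neg_eq_self]

lemma isNegInvariant_prod {H : Type*} [MeasurableSpace H] [InvolutiveNeg H] [MeasurableNeg H]
    (μ : Measure G) (ν : Measure H) [SFinite μ] [SFinite ν] [μ.IsNegInvariant] [ν.IsNegInvariant] :
    (μ.prod ν).IsNegInvariant := by
  refine ⟨?_⟩
  rw [Measure.neg, show (Neg.neg : G × H → G × H) = Prod.map Neg.neg Neg.neg from rfl,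
    ← Measure.map_prod_map _ _ measurable_neg measurable_neg, Measure.map_neg_eq_self,
    Measure.map_neg_eq_self]

end Symmetry

lemma exists_even_density {G : Type*} [MeasurableSpace G] [AddGroup G] [MeasurableNeg G]
    {vol : Measure G} [SigmaFinite vol] [vol.IsNegInvariant] {L : Measure G}
    [IsProbabilityMeasure L] [L.IsNegInvariant] (hL : L ≪ vol) :
    ∃ ρ : G → ℝ, (∀ x, 0 ≤ ρ x) ∧ (∀ x, ρ (-x) = ρ x) ∧ ∫ x, ρ x ∂vol = 1 ∧
      L = vol.withDensity fun x => ENNReal.ofReal (ρ x) := by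
  set d := L.rnDeriv vol
  have hd : Measurable d := Measure.measurable_rnDeriv L vol
  have hL_eq : vol.withDensity d = L := Measure.withDensity_rnDeriv_eq L vol hL
  have hd_neg : (fun x => d (-x)) =ᵐ[vol] d := by
    refine (withDensity_eq_iff_of_sigmaFinite (f := fun x => d (-x))
      (hd.comp measurable_neg).aemeasurable hd.aemeasurable).1 ?_
    rw [← neg_withDensity_eq, hL_eq, Measure.neg_eq_self]
  set ρ : G → ℝ := fun x => ((d x).toReal + (d (-x)).toReal) / 2
  have hρ : (fun x => ENNReal.ofReal (ρ x)) =ᵐ[vol] d := by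
    filter_upwards [hd_neg, Measure.rnDeriv_lt_top L vol] with x hx hx_top
    simp only [ρ, hx, add_self_div_two]
    exact ENNReal.ofReal_toReal hx_top.ne
  have hL_ρ : L = vol.withDensity fun x => ENNReal.ofReal (ρ x) := by
    rw [withDensity_congr_ae hρ, hL_eq]
  refine ⟨ρ, fun x => by positivity, fun x => by simp only [ρ, neg_neg, add_comm], ?_, hL_ρ⟩
  have hρm : Measurable ρ := by fun_prop
  rw [integral_eq_lintegral_of_nonneg_ae (ae_of_all _ fun x => by positivity)
    hρm.aestronglyMeasurable, ← setLIntegral_univ, ← withDensity_apply _ .univ, ← hL_ρ,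
    measure_univ, ENNReal.toReal_one]

lemma MeasureTheory.Measure.AbsolutelyContinuous.map_linearMap {E F : Type*}
    [NormedAddCommGroup E] [NormedSpace ℝ E] [MeasurableSpace E] [BorelSpace E]
    [FiniteDimensional ℝ E] [NormedAddCommGroup F] [NormedSpace ℝ F] [MeasurableSpace F]
    [BorelSpace F] {μ : Measure E} [μ.IsAddHaarMeasure] {ρ : Measure E} (hρ : ρ ≪ μ)
    {L : E →ₗ[ℝ] F} (hL : Function.Surjective L) (ν : Measure F) [ν.IsAddHaarMeasure] :
    ρ.map L ≪ ν := by
  obtain ⟨c, -, hc⟩ := L.exists_map_addHaar_eq_smul_addHaar μ ν hL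
  exact (hρ.map L.continuous_of_finiteDimensional.measurable).trans
    (hc ▸ Measure.smul_absolutelyContinuous)

section Densities

variable {α : Type*} [MeasurableSpace α] {μ : Measure α} {f : α → ℝ}

lemma withDensity_ofReal_apply (hf0 : ∀ x, 0 ≤ f x) (hf : Integrable f μ) {s : Set α}
    (hs : MeasurableSet s) :
    μ.withDensity (fun x => ENNReal.ofReal (f x)) s = ENNReal.ofReal (∫ x in s, f x ∂μ) := by
  rw [withDensity_apply _ hs, ofReal_integral_eq_lintegral_ofReal hf.restrict (ae_of_all _ hf0)]

lemma isProbabilityMeasure_withDensity_ofReal (hf0 : ∀ x, 0 ≤ f x) (hf1 : ∫ x, f x ∂μ = 1) :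
    IsProbabilityMeasure (μ.withDensity fun x => ENNReal.ofReal (f x)) := by
  refine ⟨?_⟩
  rw [withDensity_ofReal_apply hf0 (.of_integral_ne_zero (by simp [hf1])) .univ,
    Measure.restrict_univ, hf1, ENNReal.ofReal_one]

end Densities

lemma IsDensity1.integrable {γ : ℝ → ℝ} (hγ : IsDensity1 γ) : Integrable γ :=
  .of_integral_ne_zero (by simp [hγ.2])

lemma IsDensity1.isProbabilityMeasure {γ : ℝ → ℝ} (hγ : IsDensity1 γ) :
    IsProbabilityMeasure (dMeas1 γ) :=
  isProbabilityMeasure_withDensity_ofReal hγ.1 hγ.2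

lemma IsDensity.isProbabilityMeasure {n : ℕ} {p : (Fin n → ℝ) → ℝ} (hp : IsDensity p) :
    IsProbabilityMeasure (dMeas p) :=
  isProbabilityMeasure_withDensity_ofReal hp.1 hp.2

lemma tailP_nonneg {γ : ℝ → ℝ} (hγ : ∀ s, 0 ≤ γ s) (δ : ℝ) : 0 ≤ tailP γ δ :=
  setIntegral_nonneg measurableSet_Ici fun s _ => hγ s

lemma IsDensity1.dMeas1_Ici {γ : ℝ → ℝ} (hγ : IsDensity1 γ) (δ : ℝ) :
    dMeas1 γ (Ici δ) = ENNReal.ofReal (tailP γ δ) :=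
  withDensity_ofReal_apply hγ.1 hγ.integrable measurableSet_Ici

lemma isNegInvariant_dMeas1 {γ : ℝ → ℝ} (hγ : ∀ s, γ (-s) = γ s) : (dMeas1 γ).IsNegInvariant :=
  isNegInvariant_withDensity _ fun s => by rw [hγ]

instance nullSingletonClass_dMeas1 (γ : ℝ → ℝ) : NullSingletonClass (dMeas1 γ) := by
  unfold dMeas1; infer_instance

lemma isNegInvariant_dMeas {n : ℕ} {p : (Fin n → ℝ) → ℝ} (hp : IsEvenFn p) :
    (dMeas p).IsNegInvariant :=
  isNegInvariant_withDensity _ fun x => by rw [hp]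

section SymmetricMeasures

lemma measure_Iic_neg (σ : Measure ℝ) [σ.IsNegInvariant] (c : ℝ) : σ (Iic (-c)) = σ (Ici c) := by
  rw [← Measure.measure_neg σ, Set.neg_Iic, neg_neg]

variable {σ τ : Measure ℝ} [IsProbabilityMeasure σ] [IsProbabilityMeasure τ]

lemma measure_Ici_zero_eq_half [σ.IsNegInvariant] (h0 : σ {0} = 0) : σ (Ici 0) = 2⁻¹ := by
  have h : σ (Iic 0) + σ (Ici 0) = 1 := by
    rw [← measure_union_add_inter _ measurableSet_Ici, Iic_union_Ici, Iic_inter_Ici, Icc_self, h0,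
      add_zero, measure_univ]
  rw [← neg_zero, measure_Iic_neg, neg_zero] at h
  exact ENNReal.eq_inv_of_mul_eq_one_left (by rw [mul_two, h])

lemma measure_le_of_isUpperSet [NullSingletonClass τ] (h : ∀ c, σ (Ici c) ≤ τ (Ici c))
    {U : Set ℝ} (hU : IsUpperSet U) : σ U ≤ τ U := by
  rcases U.eq_empty_or_nonempty with rfl | hne
  · simp
  by_cases hbdd : BddBelow U
  · calc σ U ≤ σ (Ici (sInf U)) := measure_mono fun x hx => csInf_le hbdd hx
      _ ≤ τ (Ici (sInf U)) := h _
      _ = τ (Ioi (sInf U)) := measure_congr Ioi_ae_eq_Ici.symm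
      _ ≤ τ U := measure_mono fun x hx =>
          let ⟨_, hu, hux⟩ := exists_lt_of_csInf_lt hne hx; hU hux.le hu
  · have hU : U = univ := eq_univ_of_forall fun x =>
      let ⟨_, hu, hux⟩ := not_bddBelow_iff.1 hbdd x; hU hux.le hu
    simp [hU]

lemma lintegral_le_lintegral_of_monotone [NullSingletonClass τ]
    (h : ∀ c, σ (Ici c) ≤ τ (Ici c)) {g : ℝ → ℝ} (hg : Monotone g) (hg0 : 0 ≤ g) :
    ∫⁻ x, ENNReal.ofReal (g x) ∂σ ≤ ∫⁻ x, ENNReal.ofReal (g x) ∂τ := by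
  rw [lintegral_eq_lintegral_meas_lt σ (ae_of_all _ hg0) hg.measurable.aemeasurable,
    lintegral_eq_lintegral_meas_lt τ (ae_of_all _ hg0) hg.measurable.aemeasurable]
  exact lintegral_mono fun t =>
    measure_le_of_isUpperSet h fun x y hxy hx => lt_of_lt_of_le hx (hg hxy)

end SymmetricMeasures

instance nullSingletonClass_map_abs (τ : Measure ℝ) [NullSingletonClass τ] :
    NullSingletonClass (τ.map abs) := by
  refine ⟨fun c => ?_⟩
  rw [Measure.map_apply measurable_abs (measurableSet_singleton c)]
  refine measure_mono_null (fun x (hx : |x| = c) => ?_) ((toFinite {c, -c}).measure_zero τ)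
  rcases abs_choice x with h | h <;> simp [← hx, h]

lemma map_abs_Ici_of_pos (σ : Measure ℝ) [σ.IsNegInvariant] {c : ℝ} (hc : 0 < c) :
    σ.map abs (Ici c) = 2 * σ (Ici c) := by
  have hpre : abs ⁻¹' Ici c = Iic (-c) ∪ Ici c := by
    ext x; simp only [mem_preimage, mem_Ici, mem_union, mem_Iic, le_abs']
  rw [Measure.map_apply measurable_abs measurableSet_Ici, hpre,
    measure_union (Iic_disjoint_Ici.2 (by linarith)) measurableSet_Ici, measure_Iic_neg, two_mul]

section SymmetricComparison

variable {σ τ : Measure ℝ} [IsProbabilityMeasure σ] [IsProbabilityMeasure τ]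
  [σ.IsNegInvariant] [τ.IsNegInvariant]

lemma map_abs_Ici_le (htail : ∀ s, 0 < s → σ (Ici s) ≤ τ (Ici s)) (c : ℝ) :
    σ.map abs (Ici c) ≤ τ.map abs (Ici c) := by
  rcases lt_or_ge 0 c with hc | hc
  · rw [map_abs_Ici_of_pos σ hc, map_abs_Ici_of_pos τ hc]
    exact mul_le_mul_right (htail c hc) 2
  · have hpre : abs ⁻¹' Ici c = univ := eq_univ_of_forall fun x => hc.trans (abs_nonneg x)
    rw [Measure.map_apply measurable_abs measurableSet_Ici, Measure.map_apply measurable_abs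
      measurableSet_Ici, hpre, measure_univ, measure_univ]

/-- Dominated tails make `|x|` stochastically smaller under `σ` than under `τ`. -/
lemma lintegral_le_lintegral_of_even [NullSingletonClass τ]
    (htail : ∀ s, 0 < s → σ (Ici s) ≤ τ (Ici s)) {G : ℝ → ℝ} (hG0 : 0 ≤ G)
    (hGeven : ∀ x, G (-x) = G x) (hGmono : MonotoneOn G (Ici 0)) :
    ∫⁻ x, ENNReal.ofReal (G x) ∂σ ≤ ∫⁻ x, ENNReal.ofReal (G x) ∂τ := by
  set g : ℝ → ℝ := fun s => G (max s 0)
  have hg : Monotone g := fun s t hst =>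
    hGmono (le_max_right s 0) (le_max_right t 0) (max_le_max_right 0 hst)
  have hGg : ∀ x, G x = g |x| := fun x => by
    simp only [g, max_eq_left (abs_nonneg x)]
    rcases abs_choice x with h | h <;> rw [h]
    rw [hGeven]
  have hmeas : Measurable fun s => ENNReal.ofReal (g s) :=
    ENNReal.measurable_ofReal.comp hg.measurable
  simp only [hGg]
  rw [← lintegral_map hmeas measurable_abs, ← lintegral_map hmeas measurable_abs]
  have := Measure.isProbabilityMeasure_map (μ := σ) measurable_abs.aemeasurable
  have := Measure.isProbabilityMeasure_map (μ := τ) measurable_abs.aemeasurable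
  exact lintegral_le_lintegral_of_monotone (map_abs_Ici_le htail) hg fun s => hG0 (max s 0)

end SymmetricComparison

/-- For symmetric `κ` this says that the mass `κ (Ioo (-x - δ) (-x + δ))` of a window of
half-width `δ` does not increase as its centre `-x` moves away from `0`. -/
def TailPairMonotone (κ : Measure ℝ) (δ : ℝ) : Prop :=
  MonotoneOn (fun x => κ (Ici (δ - x)) + κ (Ici (δ + x))) (Ici 0)

lemma conv_apply_Ici (σ κ : Measure ℝ) [SFinite κ] (δ : ℝ) :
    (σ ∗ κ) (Ici δ) = ∫⁻ x, κ (Ici (δ - x)) ∂σ := by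
  rw [Measure.conv, Measure.map_apply measurable_add measurableSet_Ici,
    Measure.prod_apply (measurable_add measurableSet_Ici)]
  congr! with x
  ext y
  simp only [mem_preimage, mem_Ici]
  constructor <;> intro h <;> linarith

lemma lintegral_measure_Ici_sub (σ κ : Measure ℝ) [σ.IsNegInvariant] (δ : ℝ) :
    ∫⁻ x, κ (Ici (δ - x)) ∂σ = ∫⁻ x, κ (Ici (δ + x)) ∂σ := by
  have hmono : Monotone fun x => κ (Ici (δ - x)) := fun x y hxy =>
    measure_mono (Ici_subset_Ici.2 (by linarith))
  conv_lhs => rw [← Measure.map_neg_eq_self σ]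
  rw [lintegral_map hmono.measurable measurable_neg]
  simp only [sub_neg_eq_add]

/-- Averaging over `±x` turns both sides into integrals of the even function
`x ↦ κ (Ici (δ - x)) + κ (Ici (δ + x))`, which is nondecreasing in `|x|`. -/
theorem conv_Ici_le_conv_Ici {σ τ κ : Measure ℝ} [IsProbabilityMeasure σ]
    [IsProbabilityMeasure τ] [IsFiniteMeasure κ] [σ.IsNegInvariant] [τ.IsNegInvariant]
    [NullSingletonClass τ] {δ : ℝ} (htail : ∀ s, 0 < s → σ (Ici s) ≤ τ (Ici s))
    (hκ : TailPairMonotone κ δ) : (σ ∗ κ) (Ici δ) ≤ (τ ∗ κ) (Ici δ) := by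
  set H : ℝ → ℝ≥0∞ := fun x => κ (Ici (δ - x)) + κ (Ici (δ + x))
  have hH : ∀ x, H x ≠ ∞ := fun x => ENNReal.add_ne_top.2 ⟨measure_ne_top _ _, measure_ne_top _ _⟩
  have htwice : ∀ (ϑ : Measure ℝ) [ϑ.IsNegInvariant],
      2 * (ϑ ∗ κ) (Ici δ) = ∫⁻ x, ENNReal.ofReal (H x).toReal ∂ϑ := by
    intro ϑ _
    have hmeas : Measurable fun x => κ (Ici (δ - x)) :=
      Monotone.measurable fun x y hxy => measure_mono (Ici_subset_Ici.2 (by linarith))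
    simp only [ENNReal.ofReal_toReal (hH _), H]
    rw [conv_apply_Ici, two_mul]
    nth_rw 2 [lintegral_measure_Ici_sub]
    rw [lintegral_add_left hmeas]
  have hGeven : ∀ x, (H (-x)).toReal = (H x).toReal := fun x => by
    simp only [H, sub_neg_eq_add, ← sub_eq_add_neg, add_comm]
  have hGmono : MonotoneOn (fun x => (H x).toReal) (Ici 0) := fun x hx y hy hxy =>
    ENNReal.toReal_mono (hH y) (hκ hx hy hxy)
  have h := lintegral_le_lintegral_of_even htail (fun x => ENNReal.toReal_nonneg) hGeven hGmono
  rw [← htwice σ, ← htwice τ] at h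
  exact (ENNReal.mul_le_mul_iff_right two_ne_zero ENNReal.ofNat_ne_top).1 h

lemma tailPairMonotone_dirac_zero {δ : ℝ} (hδ : 0 < δ) : TailPairMonotone (Measure.dirac 0) δ := by
  intro x hx y hy hxy
  simp only [mem_Ici] at hx hy
  simp only [Measure.dirac_apply' _ measurableSet_Ici, indicator, mem_Ici, Pi.one_apply]
  split_ifs <;> norm_num <;> linarith

lemma map_const_mul_apply_Ici (κ : Measure ℝ) {c : ℝ} (hc : 0 < c) (u : ℝ) :
    κ.map (c * ·) (Ici u) = κ (Ici (u / c)) := by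
  rw [Measure.map_apply (measurable_const_mul c) measurableSet_Ici]
  congr 1
  ext t
  simp only [mem_preimage, mem_Ici, div_le_iff₀' hc]

lemma TailPairMonotone.map_const_mul {κ : Measure ℝ} {c δ : ℝ} (hc : 0 < c)
    (h : TailPairMonotone κ (δ / c)) : TailPairMonotone (κ.map (c * ·)) δ := by
  intro x hx y hy hxy
  simp only [map_const_mul_apply_Ici κ hc, sub_div, add_div]
  exact h (div_nonneg hx hc.le) (div_nonneg hy hc.le) (div_le_div_of_nonneg_right hxy hc.le)

lemma Nice.apply_le_of_abs_le {f : ℝ → ℝ} (hf : Nice f) {u v : ℝ} (h : |u| ≤ |v|) :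
    f v ≤ f u := by
  have habs : ∀ x, f |x| = f x := fun x => by
    rcases abs_choice x with hx | hx <;> rw [hx]
    exact hf.2.1 x
  rw [← habs u, ← habs v]
  exact hf.2.2.2 (abs_nonneg u) (abs_nonneg v) h

lemma IsDensity1.tailP_sub_tailP {γ : ℝ → ℝ} (hγ : IsDensity1 γ) (a b : ℝ) :
    tailP γ a - tailP γ b = ∫ t in a..b, γ t :=
  intervalIntegral.integral_Ici_sub_Ici' hγ.integrable.integrableOn hγ.integrable.integrableOn

/-- Reflection in `δ` maps `[δ + x, δ + y]` onto `[δ - y, δ - x]` and moves every point of it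
no closer to `0`, so a nice density has at least as much mass on the latter interval. -/
lemma Nice.monotoneOn_tailP_pair {f : ℝ → ℝ} (hf : Nice f) {δ : ℝ} (hδ : 0 ≤ δ) :
    MonotoneOn (fun x => tailP f (δ - x) + tailP f (δ + x)) (Ici 0) := by
  intro x hx y hy hxy
  simp only [mem_Ici] at hx hy
  have hint : ∀ a b, IntervalIntegrable f volume a b := fun a b =>
    hf.2.2.1.intervalIntegrable a b
  have hreflect : ∫ t in (δ + x)..(δ + y), f t = ∫ t in (δ - y)..(δ - x), f (2 * δ - t) := by
    rw [intervalIntegral.integral_comp_sub_left]; ring_nf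
  have hcompare : ∫ t in (δ - y)..(δ - x), f (2 * δ - t) ≤ ∫ t in (δ - y)..(δ - x), f t :=
    intervalIntegral.integral_mono_on (by linarith)
      ((hf.2.2.1.comp (continuous_sub_left _)).intervalIntegrable _ _) (hint _ _)
      fun t ht => hf.apply_le_of_abs_le (by
        rw [abs_of_nonneg (by linarith [ht.2] : 0 ≤ 2 * δ - t), abs_le]
        constructor <;> linarith [ht.2])
  have h1 := hf.1.tailP_sub_tailP (δ - y) (δ - x)
  have h2 := hf.1.tailP_sub_tailP (δ + x) (δ + y)
  linarith

lemma Nice.tailPairMonotone {f : ℝ → ℝ} (hf : Nice f) {δ : ℝ} (hδ : 0 ≤ δ) :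
    TailPairMonotone (dMeas1 f) δ := by
  intro x hx y hy hxy
  simp only [hf.1.dMeas1_Ici, ← ENNReal.ofReal_add (tailP_nonneg hf.1.1 _)
    (tailP_nonneg hf.1.1 _)]
  exact ENNReal.ofReal_le_ofReal (hf.monotoneOn_tailP_pair hδ hx hy hxy)

section Convolution

variable {μ ν : ℝ → ℝ}

lemma Nice.le_apply_zero (hμ : Nice μ) (x : ℝ) : μ x ≤ μ 0 :=
  hμ.apply_le_of_abs_le (by simp)

lemma Nice.integrable_comp_sub_mul (hμ : Nice μ) (hν : Integrable ν) (s : ℝ) :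
    Integrable fun r => μ (s - r) * ν r :=
  hν.bdd_mul (hμ.2.2.1.comp (continuous_sub_left s)).aestronglyMeasurable
    (ae_of_all _ fun r => by
      rw [Real.norm_eq_abs, abs_of_nonneg (hμ.1.1 _)]; exact hμ.le_apply_zero _)

lemma convol_eq_convolution : convol μ ν = convolution ν μ (ContinuousLinearMap.mul ℝ ℝ) := by
  ext s
  simp only [convol, convolution_def, ContinuousLinearMap.mul_apply', mul_comm]

lemma Nice.continuous_convol (hμ : Nice μ) (hν : Integrable ν) : Continuous (convol μ ν) := by
  rw [convol_eq_convolution]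
  refine BddAbove.continuous_convolution_right_of_integrable _ ⟨μ 0, ?_⟩ hν hμ.2.2.1
  rintro _ ⟨x, rfl⟩
  show ‖μ x‖ ≤ μ 0
  rw [Real.norm_eq_abs, abs_of_nonneg (hμ.1.1 x)]
  exact hμ.le_apply_zero x

lemma convol_neg (hμ : ∀ s, μ (-s) = μ s) (hν : ∀ s, ν (-s) = ν s) (s : ℝ) :
    convol μ ν (-s) = convol μ ν s := by
  calc convol μ ν (-s) = ∫ r, μ (-s - -r) * ν (-r) :=
        (integral_neg_eq_self (fun r => μ (-s - r) * ν r) volume).symm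
    _ = convol μ ν s := by
        congr 1 with r
        rw [show -s - -r = -(s - r) by ring, hμ, hν]

/-- With `D t = μ (s₁ - t) - μ (s₂ - t)`, the reflection `t ↦ s₁ + s₂ - t` turns `D` into `-D`,
so `2 (convol μ ν s₁ - convol μ ν s₂) = ∫ D t (ν t - ν (s₁ + s₂ - t))`, and both factors of the
integrand change sign exactly at `(s₁ + s₂) / 2`. -/
lemma Nice.antitoneOn_convol (hμ : Nice μ) (hν : Nice ν) : AntitoneOn (convol μ ν) (Ici 0) := by
  intro s₁ hs₁ s₂ hs₂ hs
  simp only [mem_Ici] at hs₁ hs₂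
  set D : ℝ → ℝ := fun t => μ (s₁ - t) - μ (s₂ - t)
  have hint : Integrable fun t => D t * ν t := by
    simp only [D, sub_mul]
    exact (hμ.integrable_comp_sub_mul hν.1.integrable s₁).sub
      (hμ.integrable_comp_sub_mul hν.1.integrable s₂)
  have hdiff : convol μ ν s₁ - convol μ ν s₂ = ∫ t, D t * ν t := by
    simp only [convol, D, sub_mul]
    exact (integral_sub (hμ.integrable_comp_sub_mul hν.1.integrable s₁)
      (hμ.integrable_comp_sub_mul hν.1.integrable s₂)).symm
  have hD : ∀ t, D (s₁ + s₂ - t) = -D t := fun t => by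
    simp only [D]
    rw [show s₁ - (s₁ + s₂ - t) = -(s₂ - t) by ring, show s₂ - (s₁ + s₂ - t) = -(s₁ - t) by ring,
      hμ.2.1, hμ.2.1, neg_sub]
  have hreflect : ∫ t, D t * ν t = -∫ t, D t * ν (s₁ + s₂ - t) := by
    rw [← integral_sub_left_eq_self _ volume (s₁ + s₂), ← integral_neg]
    simp only [hD, neg_mul]
  have hint' : Integrable fun t => D t * ν (s₁ + s₂ - t) := by
    refine (hint.comp_sub_left (s₁ + s₂)).neg.congr (ae_of_all _ fun t => ?_)
    simp only [Pi.neg_apply, hD, neg_mul, neg_neg]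
  have hsign : ∀ t, 0 ≤ D t * (ν t - ν (s₁ + s₂ - t)) := fun t => by
    have habs : ∀ {u v : ℝ}, u ^ 2 ≤ v ^ 2 → |u| ≤ |v| := fun h => sq_le_sq.1 h
    rcases le_total t ((s₁ + s₂) / 2) with ht | ht
    · exact mul_nonneg (sub_nonneg.2 (hμ.apply_le_of_abs_le (habs (by nlinarith))))
        (sub_nonneg.2 (hν.apply_le_of_abs_le (habs (by nlinarith))))
    · exact mul_nonneg_of_nonpos_of_nonpos
        (sub_nonpos.2 (hμ.apply_le_of_abs_le (habs (by nlinarith))))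
        (sub_nonpos.2 (hν.apply_le_of_abs_le (habs (by nlinarith))))
  have h : 0 ≤ ∫ t, D t * (ν t - ν (s₁ + s₂ - t)) := integral_nonneg hsign
  simp only [mul_sub] at h
  rw [integral_sub hint hint'] at h
  linarith

lemma Nice.dMeas1_convol (hμ : Nice μ) (hν : Nice ν) :
    dMeas1 (convol μ ν) = dMeas1 ν ∗ dMeas1 μ := by
  rw [dMeas1, dMeas1, dMeas1, conv_withDensity_eq_lconvolution
    hν.2.2.1.measurable.ennreal_ofReal hμ.2.2.1.measurable.ennreal_ofReal]
  congr 1 with s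
  rw [lconvolution_def, convol, ofReal_integral_eq_lintegral_ofReal
    (hμ.integrable_comp_sub_mul hν.1.integrable s)
    (ae_of_all _ fun r => mul_nonneg (hμ.1.1 _) (hν.1.1 _))]
  congr 1 with r
  rw [ENNReal.ofReal_mul (hμ.1.1 _), mul_comm, neg_add_eq_sub]

lemma nice_convol (hμ : Nice μ) (hν : Nice ν) : Nice (convol μ ν) := by
  have hcont := hμ.continuous_convol hν.1.integrable
  have hnonneg : ∀ s, 0 ≤ convol μ ν s := fun s =>
    integral_nonneg fun r => mul_nonneg (hμ.1.1 _) (hν.1.1 _)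
  have := hμ.1.isProbabilityMeasure
  have := hν.1.isProbabilityMeasure
  refine ⟨⟨hnonneg, ?_⟩, convol_neg hμ.2.1 hν.2.1, hcont, hμ.antitoneOn_convol hν⟩
  rw [integral_eq_lintegral_of_nonneg_ae (ae_of_all _ hnonneg) hcont.aestronglyMeasurable,
    ← setLIntegral_univ, ← withDensity_apply _ .univ, ← dMeas1, hμ.dMeas1_convol hν,
    measure_univ, ENNReal.toReal_one]

end Convolution

section LinearAlgebra

variable {ι ι₁ ι₂ : Type*} [Fintype ι] [Fintype ι₁] [Fintype ι₂]

lemma dotProduct_transpose_mulVec_self (M : Matrix ι ι₁ ℝ) (w : ι → ℝ) :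
    (Mᵀ *ᵥ w) ⬝ᵥ (Mᵀ *ᵥ w) = w ⬝ᵥ (M * Mᵀ) *ᵥ w := by
  rw [dotProduct_mulVec, ← mulVec_transpose, transpose_transpose, mulVec_mulVec, dotProduct_comm]

lemma dotProduct_mulVec_eq_transpose (M : Matrix ι ι₁ ℝ) (w : ι → ℝ)
    (x : ι₁ → ℝ) : w ⬝ᵥ (M *ᵥ x) = (Mᵀ *ᵥ w) ⬝ᵥ x := by
  rw [dotProduct_mulVec, mulVec_transpose]

variable [DecidableEq ι]

lemma dotProduct_self_le_one_of_posSemidef {Θ : Matrix ι ι ℝ}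
    {M : Matrix ι ι₁ ℝ} (hΘ : Θ.PosDef) (hM : (Θ * Θ - M * Mᵀ).PosSemidef)
    {e : ι → ℝ} (he : e ⬝ᵥ e = 1) :
    (Mᵀ *ᵥ (Θ⁻¹ *ᵥ e)) ⬝ᵥ (Mᵀ *ᵥ (Θ⁻¹ *ᵥ e)) ≤ 1 := by
  have hΘT : Θᵀ = Θ := (isHermitian_iff_isSymm.1 hΘ.1).eq
  have hΘw : Θᵀ *ᵥ (Θ⁻¹ *ᵥ e) = e := by
    rw [hΘT, mulVec_mulVec, mul_nonsing_inv _ ((isUnit_iff_isUnit_det Θ).1 hΘ.isUnit),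
      one_mulVec]
  have h := hM.dotProduct_mulVec_nonneg (Θ⁻¹ *ᵥ e)
  rw [show Θ * Θ = Θ * Θᵀ by rw [hΘT]] at h
  rwa [star_trivial, sub_mulVec, dotProduct_sub, sub_nonneg, ← dotProduct_transpose_mulVec_self,
    ← dotProduct_transpose_mulVec_self, hΘw, he] at h

lemma exists_dotProduct_eq_add {Θ : Matrix ι ι ℝ} {A : Matrix ι ι₁ ℝ}
    {B : Matrix ι ι₂ ℝ} (hΘ : Θ.PosDef) (hA : (Θ * Θ - A * Aᵀ).PosSemidef)
    (hB : (Θ * Θ - B * Bᵀ).PosSemidef) {e : ι → ℝ} (he : e ⬝ᵥ e = 1) :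
    ∃ a b, a ⬝ᵥ a ≤ 1 ∧ b ⬝ᵥ b ≤ 1 ∧
      ∀ x y, e ⬝ᵥ (Θ⁻¹ *ᵥ (A *ᵥ x + B *ᵥ y)) = a ⬝ᵥ x + b ⬝ᵥ y := by
  have hΘT : Θ⁻¹ᵀ = Θ⁻¹ := by
    rw [transpose_nonsing_inv, (isHermitian_iff_isSymm.1 hΘ.1).eq]
  refine ⟨_, _, dotProduct_self_le_one_of_posSemidef hΘ hA he,
    dotProduct_self_le_one_of_posSemidef hΘ hB he, fun x y => ?_⟩
  rw [dotProduct_mulVec_eq_transpose, hΘT, dotProduct_add, dotProduct_mulVec_eq_transpose,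
    dotProduct_mulVec_eq_transpose]

lemma surjective_coprod_toLin' [DecidableEq ι₁] [DecidableEq ι₂] {A : Matrix ι ι₁ ℝ}
    {B : Matrix ι ι₂ ℝ} (hAB : (A * Aᵀ + B * Bᵀ).PosDef) :
    Function.Surjective ((toLin' A).coprod (toLin' B)) := by
  intro v
  set u := (A * Aᵀ + B * Bᵀ)⁻¹ *ᵥ v
  refine ⟨(Aᵀ *ᵥ u, Bᵀ *ᵥ u), ?_⟩
  simp only [LinearMap.coprod_apply, toLin'_apply]
  rw [mulVec_mulVec u A, mulVec_mulVec u B, ← add_mulVec, mulVec_mulVec,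
    mul_nonsing_inv _ ((isUnit_iff_isUnit_det _).1 hAB.isUnit), one_mulVec]

lemma surjective_toLin'_inv {Θ : Matrix ι ι ℝ} (hΘ : Θ.PosDef) :
    Function.Surjective (toLin' Θ⁻¹) := fun v => ⟨Θ *ᵥ v, by
  rw [toLin'_apply, mulVec_mulVec, nonsing_inv_mul _ ((isUnit_iff_isUnit_det Θ).1 hΘ.isUnit),
    one_mulVec]⟩

end LinearAlgebra

section Projections

variable {k : ℕ}

lemma exists_eq_smul_of_ne_zero {ι : Type*} [Fintype ι] {a : ι → ℝ} (ha : a ≠ 0) :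
    ∃ c > 0, c * c = a ⬝ᵥ a ∧ ∃ e : ι → ℝ, e ⬝ᵥ e = 1 ∧ a = c • e := by
  have hpos : 0 < a ⬝ᵥ a := dotProduct_self_star_pos_iff.2 ha
  have hc : 0 < √(a ⬝ᵥ a) := Real.sqrt_pos.2 hpos
  refine ⟨√(a ⬝ᵥ a), hc, Real.mul_self_sqrt hpos.le, (√(a ⬝ᵥ a))⁻¹ • a, ?_, ?_⟩
  · rw [smul_dotProduct, dotProduct_smul, smul_eq_mul, smul_eq_mul, ← mul_assoc,
      ← mul_inv, Real.mul_self_sqrt hpos.le, inv_mul_cancel₀ hpos.ne']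
  · rw [smul_smul, mul_inv_cancel₀ hc.ne', one_smul]

lemma map_smul_dotProduct (ρ : Measure (Fin k → ℝ)) (c : ℝ) (e : Fin k → ℝ) :
    ρ.map ((c • e) ⬝ᵥ ·) = (ρ.map (e ⬝ᵥ ·)).map (c * ·) := by
  rw [Measure.map_map (measurable_const_mul c) (by fun_prop)]
  simp only [smul_dotProduct, smul_eq_mul, Function.comp_def]

instance isProbabilityMeasure_map_dotProduct (ρ : Measure (Fin k → ℝ)) [IsProbabilityMeasure ρ]
    (a : Fin k → ℝ) : IsProbabilityMeasure (ρ.map (a ⬝ᵥ ·)) :=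
  Measure.isProbabilityMeasure_map (by fun_prop)

instance isNegInvariant_map_dotProduct (ρ : Measure (Fin k → ℝ)) [ρ.IsNegInvariant]
    (a : Fin k → ℝ) : (ρ.map (a ⬝ᵥ ·)).IsNegInvariant :=
  isNegInvariant_map ρ (by fun_prop) (dotProduct_neg a)

lemma SubSpherical.map_dotProduct_Ici_le {γ : ℝ → ℝ} {p : (Fin k → ℝ) → ℝ}
    (hp : SubSpherical γ p) (hγ : IsDensity1 γ) {e : Fin k → ℝ} (he : e ⬝ᵥ e = 1) {δ : ℝ}
    (hδ : 0 ≤ δ) : (dMeas p).map (e ⬝ᵥ ·) (Ici δ) ≤ dMeas1 γ (Ici δ) := by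
  have hmeas : Measurable (e ⬝ᵥ ·) := by fun_prop
  rw [Measure.map_apply hmeas measurableSet_Ici, hγ.dMeas1_Ici, dMeas, withDensity_ofReal_apply
    hp.1.1 (.of_integral_ne_zero (by simp [hp.1.2])) (hmeas measurableSet_Ici)]
  exact ENNReal.ofReal_le_ofReal (hp.2.2 e he δ hδ)

lemma SubSpherical.map_dotProduct_Ici_le_of_dotProduct_self_le {γ : ℝ → ℝ}
    {p : (Fin k → ℝ) → ℝ} (hp : SubSpherical γ p) (hγ : IsDensity1 γ) {a : Fin k → ℝ}
    (ha : a ⬝ᵥ a ≤ 1) {s : ℝ} (hs : 0 < s) : (dMeas p).map (a ⬝ᵥ ·) (Ici s) ≤ dMeas1 γ (Ici s) := by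
  rcases eq_or_ne a 0 with rfl | ha0
  · rw [Measure.map_apply (by fun_prop) measurableSet_Ici]
    simp [not_le.2 hs]
  · obtain ⟨c, hc, hcc, e, he, rfl⟩ := exists_eq_smul_of_ne_zero ha0
    rw [map_smul_dotProduct, map_const_mul_apply_Ici _ hc]
    exact (hp.map_dotProduct_Ici_le hγ he (div_nonneg hs.le hc.le)).trans
      (measure_mono (Ici_subset_Ici.2 (le_div_self hs.le hc (by nlinarith))))

lemma tailPairMonotone_map_dotProduct (ρ : Measure (Fin k → ℝ)) [IsProbabilityMeasure ρ]
    (hρ : ∀ e : Fin k → ℝ, e ⬝ᵥ e = 1 → ∃ f, Nice f ∧ ρ.map (e ⬝ᵥ ·) = dMeas1 f)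
    (b : Fin k → ℝ) {δ : ℝ} (hδ : 0 < δ) : TailPairMonotone (ρ.map (b ⬝ᵥ ·)) δ := by
  rcases eq_or_ne b 0 with rfl | hb
  · simp only [zero_dotProduct, Measure.map_const, measure_univ, one_smul]
    exact tailPairMonotone_dirac_zero hδ
  · obtain ⟨c, hc, -, e, he, rfl⟩ := exists_eq_smul_of_ne_zero hb
    obtain ⟨f, hf, hfe⟩ := hρ e he
    rw [map_smul_dotProduct, hfe]
    exact (hf.tailPairMonotone (div_nonneg hδ.le hc.le)).map_const_mul hc

end Projections

/-- With `X = a ⬝ᵥ η` and `Y = b ⬝ᵥ ζ`, compare first `X` with `μ` (which needs the law of `Y`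
to be window-monotone: this is where complete monotonicity enters), then `Y` with `ν`. -/
theorem prod_dotProduct_add_ge_le {n m : ℕ} {μ ν : ℝ → ℝ} (hμ : Nice μ) (hν : Nice ν)
    {p : (Fin n → ℝ) → ℝ} {q : (Fin m → ℝ) → ℝ} (hp : SubSpherical μ p) (hq : SubSpherical ν q)
    (hq_proj : ∀ e : Fin m → ℝ, e ⬝ᵥ e = 1 → ∃ f, Nice f ∧ (dMeas q).map (e ⬝ᵥ ·) = dMeas1 f)
    {a : Fin n → ℝ} {b : Fin m → ℝ} (ha : a ⬝ᵥ a ≤ 1) (hb : b ⬝ᵥ b ≤ 1) {δ : ℝ} (hδ : 0 < δ) :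
    (dMeas p).prod (dMeas q) {z | δ ≤ a ⬝ᵥ z.1 + b ⬝ᵥ z.2} ≤
      ENNReal.ofReal (tailP (convol μ ν) δ) := by
  have := hp.1.isProbabilityMeasure
  have := hq.1.isProbabilityMeasure
  have := hμ.1.isProbabilityMeasure
  have := hν.1.isProbabilityMeasure
  have := isNegInvariant_dMeas hp.2.1
  have := isNegInvariant_dMeas hq.2.1
  have := isNegInvariant_dMeas1 hμ.2.1
  have := isNegInvariant_dMeas1 hν.2.1
  have hconv : (dMeas p).prod (dMeas q) {z | δ ≤ a ⬝ᵥ z.1 + b ⬝ᵥ z.2} =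
      ((dMeas p).map (a ⬝ᵥ ·) ∗ (dMeas q).map (b ⬝ᵥ ·)) (Ici δ) := by
    rw [Measure.conv, Measure.map_prod_map _ _ (by fun_prop) (by fun_prop),
      Measure.map_map measurable_add (by fun_prop), Measure.map_apply (by fun_prop)
      measurableSet_Ici]
    rfl
  rw [hconv, ← (nice_convol hμ hν).1.dMeas1_Ici, hμ.dMeas1_convol hν]
  calc ((dMeas p).map (a ⬝ᵥ ·) ∗ (dMeas q).map (b ⬝ᵥ ·)) (Ici δ)
      ≤ (dMeas1 μ ∗ (dMeas q).map (b ⬝ᵥ ·)) (Ici δ) :=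
        conv_Ici_le_conv_Ici (fun s hs => hp.map_dotProduct_Ici_le_of_dotProduct_self_le hμ.1 ha hs)
          (tailPairMonotone_map_dotProduct _ hq_proj b hδ)
    _ = ((dMeas q).map (b ⬝ᵥ ·) ∗ dMeas1 μ) (Ici δ) := by rw [Measure.conv_comm]
    _ ≤ (dMeas1 ν ∗ dMeas1 μ) (Ici δ) :=
        conv_Ici_le_conv_Ici (fun s hs => hq.map_dotProduct_Ici_le_of_dotProduct_self_le hν.1 hb hs)
          (hμ.tailPairMonotone hδ.le)

lemma MeasureTheory.Measure.AbsolutelyContinuous.map_dotProduct {r : ℕ}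
    {M : Measure (Fin r → ℝ)} (hM : M ≪ volume) {e : Fin r → ℝ} (he : e ⬝ᵥ e = 1) :
    M.map (e ⬝ᵥ ·) ≪ volume :=
  hM.map_linearMap (L := dotProductBilin ℝ ℝ e) (fun t => ⟨t • e, by simp [he]⟩) volume

lemma measure_dotProduct_nonneg_eq {r : ℕ} {M : Measure (Fin r → ℝ)} [IsProbabilityMeasure M]
    [M.IsNegInvariant] (hM : M ≪ volume) {e : Fin r → ℝ} (he : e ⬝ᵥ e = 1) {γ : ℝ → ℝ}
    (hγ : IsDensity1 γ) (heven : ∀ s, γ (-s) = γ s) :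
    M {ξ | 0 ≤ e ⬝ᵥ ξ} = ENNReal.ofReal (tailP γ 0) := by
  have := hγ.isProbabilityMeasure
  have := isNegInvariant_dMeas1 heven
  have hproj := hM.map_dotProduct he
  calc M {ξ | 0 ≤ e ⬝ᵥ ξ} = M.map (e ⬝ᵥ ·) (Ici 0) :=
        (Measure.map_apply (f := (e ⬝ᵥ ·)) (by fun_prop) measurableSet_Ici).symm
    _ = dMeas1 γ (Ici 0) := by
        rw [measure_Ici_zero_eq_half (hproj (measure_singleton 0)),
          measure_Ici_zero_eq_half (measure_singleton 0)]
    _ = ENNReal.ofReal (tailP γ 0) := hγ.dMeas1_Ici 0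

lemma subSpherical_of_tail_le {r : ℕ} {γ : ℝ → ℝ} (hγ : ∀ s, 0 ≤ γ s)
    {ρ : (Fin r → ℝ) → ℝ} (hρ0 : ∀ x, 0 ≤ ρ x) (hρ1 : ∫ x, ρ x = 1) (hρ : IsEvenFn ρ)
    (htail : ∀ e : Fin r → ℝ, e ⬝ᵥ e = 1 → ∀ δ : ℝ, 0 ≤ δ →
      dMeas ρ {ξ | δ ≤ e ⬝ᵥ ξ} ≤ ENNReal.ofReal (tailP γ δ)) :
    SubSpherical γ ρ := by
  refine ⟨⟨hρ0, hρ1⟩, hρ, fun e he δ hδ => ?_⟩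
  have h := htail e he δ hδ
  rwa [dMeas, withDensity_ofReal_apply hρ0 (.of_integral_ne_zero (by simp [hρ1]))
    (measurableSet_le (by fun_prop) (by fun_prop)),
    ENNReal.ofReal_le_ofReal_iff (tailP_nonneg hγ δ)] at h

lemma absolutelyContinuous_map_mulVec_add {r n m : ℕ} {Θ : Matrix (Fin r) (Fin r) ℝ}
    {A : Matrix (Fin r) (Fin n) ℝ} {B : Matrix (Fin r) (Fin m) ℝ} (hΘ : Θ.PosDef)
    (hAB : (A * Aᵀ + B * Bᵀ).PosDef) {P : Measure (Fin n → ℝ)} {Q : Measure (Fin m → ℝ)}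
    [SFinite P] [SFinite Q] (hP : P ≪ volume) (hQ : Q ≪ volume) :
    (P.prod Q).map (fun z => Θ⁻¹ *ᵥ (A *ᵥ z.1 + B *ᵥ z.2)) ≪ volume := by
  have := Measure.prod.instIsAddHaarMeasure (volume : Measure (Fin n → ℝ))
    (volume : Measure (Fin m → ℝ))
  exact (hP.prod hQ).map_linearMap (L := toLin' Θ⁻¹ ∘ₗ (toLin' A).coprod (toLin' B))
    ((surjective_toLin'_inv hΘ).comp (surjective_coprod_toLin' hAB)) volume

lemma isNegInvariant_map_mulVec_add {r n m : ℕ} (Θ : Matrix (Fin r) (Fin r) ℝ)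
    (A : Matrix (Fin r) (Fin n) ℝ) (B : Matrix (Fin r) (Fin m) ℝ) (P : Measure (Fin n → ℝ))
    (Q : Measure (Fin m → ℝ)) [SFinite P] [SFinite Q] [P.IsNegInvariant] [Q.IsNegInvariant] :
    ((P.prod Q).map fun z => Θ⁻¹ *ᵥ (A *ᵥ z.1 + B *ᵥ z.2)).IsNegInvariant :=
  have := isNegInvariant_prod P Q
  isNegInvariant_map _ (by fun_prop) fun z => by
    rw [Prod.fst_neg, Prod.snd_neg, mulVec_neg, mulVec_neg, ← neg_add, mulVec_neg]

theorem measure_dotProduct_ge_le {n m r : ℕ} {μ ν : ℝ → ℝ} (hμ : Nice μ) (hν : Nice ν)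
    {p : (Fin n → ℝ) → ℝ} {q : (Fin m → ℝ) → ℝ} (hp : SubSpherical μ p) (hq : SubSpherical ν q)
    (hq_proj : ∀ e : Fin m → ℝ, e ⬝ᵥ e = 1 → ∃ f, Nice f ∧ (dMeas q).map (e ⬝ᵥ ·) = dMeas1 f)
    {Θ : Matrix (Fin r) (Fin r) ℝ} {A : Matrix (Fin r) (Fin n) ℝ} {B : Matrix (Fin r) (Fin m) ℝ}
    (hΘ : Θ.PosDef) (hA : (Θ * Θ - A * Aᵀ).PosSemidef) (hB : (Θ * Θ - B * Bᵀ).PosSemidef)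
    {M : Measure (Fin r → ℝ)} [IsProbabilityMeasure M] [M.IsNegInvariant] (hac : M ≪ volume)
    (hM : M = ((dMeas p).prod (dMeas q)).map fun z => Θ⁻¹ *ᵥ (A *ᵥ z.1 + B *ᵥ z.2))
    {e : Fin r → ℝ} (he : e ⬝ᵥ e = 1) {δ : ℝ} (hδ : 0 ≤ δ) :
    M {ξ | δ ≤ e ⬝ᵥ ξ} ≤ ENNReal.ofReal (tailP (convol μ ν) δ) := by
  have hγ := nice_convol hμ hν
  rcases hδ.eq_or_lt with rfl | hδ
  · exact (measure_dotProduct_nonneg_eq hac he hγ.1 hγ.2.1).le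
  obtain ⟨a, b, ha, hb, hab⟩ := exists_dotProduct_eq_add hΘ hA hB he
  rw [hM, Measure.map_apply (by fun_prop) (measurableSet_le measurable_const (by fun_prop))]
  simpa only [preimage_ofPred_eq, hab] using
    prod_dotProduct_add_ge_le hμ hν hp hq hq_proj ha hb hδ

/-- for `ξ = Θ⁻¹[Aη + Bζ]` with independent `η ∼ p ∈ Pⁿ ⊆ P_μ^n` and
`ζ ∼ q ∈ Pᵐ`, `Pᵐ` completely monotone in `P_ν^m`, and `Θ² ⪰ AAᵀ`, `Θ² ⪰ BBᵀ`,
`AAᵀ + BBᵀ ≻ 0`: the convolution `γ = μ⋆ν` is nice, all one-dimensional projections of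
the distribution of `ξ` satisfy the `γ`-tail bound, have symmetric densities, and the
distribution of `ξ` has a density belonging to `P_γ^r`. -/
theorem statement3 {n m r : ℕ}
    (μ ν : ℝ → ℝ) (hμ : Nice μ) (hν : Nice ν)
    (Pn : Set ((Fin n → ℝ) → ℝ)) (hPn : ∀ p ∈ Pn, SubSpherical μ p)
    (Pm : Set ((Fin m → ℝ) → ℝ)) (hPm : CompMonotone ν Pm)
    (A : Matrix (Fin r) (Fin n) ℝ) (B : Matrix (Fin r) (Fin m) ℝ)
    (Θ : Matrix (Fin r) (Fin r) ℝ) (hΘ : Θ.PosDef)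
    (hA : (Θ * Θ - A * Aᵀ).PosSemidef) (hB : (Θ * Θ - B * Bᵀ).PosSemidef)
    (hAB : (A * Aᵀ + B * Bᵀ).PosDef)
    (p : (Fin n → ℝ) → ℝ) (hp : p ∈ Pn)
    (q : (Fin m → ℝ) → ℝ) (hq : q ∈ Pm)
    (μξ : Measure (Fin r → ℝ))
    (hμξ : μξ = Measure.map
      (fun z : (Fin n → ℝ) × (Fin m → ℝ) => Θ⁻¹ *ᵥ (A *ᵥ z.1 + B *ᵥ z.2))
      ((dMeas p).prod (dMeas q))) :
    Nice (convol μ ν) ∧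
    (∀ e : Fin r → ℝ, e ⬝ᵥ e = 1 → ∀ δ : ℝ, 0 ≤ δ →
      μξ {ξ | δ ≤ e ⬝ᵥ ξ} ≤ ENNReal.ofReal (tailP (convol μ ν) δ)) ∧
    (∀ e : Fin r → ℝ, e ⬝ᵥ e = 1 →
      ∃ f : ℝ → ℝ, IsDensity1 f ∧ (∀ s, f (-s) = f s) ∧
        Measure.map (fun ξ => e ⬝ᵥ ξ) μξ = dMeas1 f) ∧
    (∃ ρ : (Fin r → ℝ) → ℝ, SubSpherical (convol μ ν) ρ ∧ μξ = dMeas ρ) := by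
  obtain ⟨-, hPm, hPm_proj⟩ := hPm
  have hp' := hPn p hp
  have hq' := hPm q hq
  have := hp'.1.isProbabilityMeasure
  have := hq'.1.isProbabilityMeasure
  have := isNegInvariant_dMeas hp'.2.1
  have := isNegInvariant_dMeas hq'.2.1
  have : IsProbabilityMeasure μξ := hμξ ▸ Measure.isProbabilityMeasure_map (by fun_prop)
  have : μξ.IsNegInvariant := hμξ ▸ isNegInvariant_map_mulVec_add Θ A B _ _
  have hac : μξ ≪ volume := hμξ ▸ absolutelyContinuous_map_mulVec_add hΘ hAB
    (withDensity_absolutelyContinuous _ _) (withDensity_absolutelyContinuous _ _)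
  have htail := fun (e : Fin r → ℝ) (he : e ⬝ᵥ e = 1) (δ : ℝ) (hδ : 0 ≤ δ) =>
    measure_dotProduct_ge_le hμ hν hp' hq' (hPm_proj q hq) hΘ hA hB hac hμξ he hδ
  refine ⟨nice_convol hμ hν, htail, fun e he => ?_, ?_⟩
  · obtain ⟨f, hf0, hfeven, hf1, hf⟩ := exists_even_density (hac.map_dotProduct he)
    exact ⟨f, ⟨hf0, hf1⟩, hfeven, hf⟩
  · obtain ⟨ρ, hρ0, hρeven, hρ1, hρ⟩ := exists_even_density hac
    exact ⟨ρ, subSpherical_of_tail_le (nice_convol hμ hν).1.1 hρ0 hρ1 hρeven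
      (by rwa [dMeas, ← hρ]), hρ⟩
end
end

section
/- Let P_γ be a sub-spherical family of distributions on ℝⁿ, let X₁, X₂ ⊂ ℝⁿ be nonempty closed convex disjoint sets with at least one bounded, and let δ, h*, c*, s* be the associated Euclidean-separation entities. Let α₁, α₂ ≥ 0 satisfy α₁ + α₂ ≤ 2δ. Then: (i) for every x ∈ X₁ and p ∈ P_γ, the p-probability of the event {ξ : s*(x+ξ) < ½(α₂ − α₁)} is at most P_γ(α₁) := ∫_{α₁}^∞ γ(s)ds; (ii) for every x ∈ X₂ and p ∈ P_γ, the p-probability of the event {ξ : s*(x+ξ) ≥ ½(α₂ − α₁)} is at most P_γ(α₂). In particular, with α₁ = α₂ = δ, the single-observation test T₁ which accepts H₁ : x ∈ X₁ when s*(ω) ≥ 0 and accepts H₂ : x ∈ X₂ otherwise has Risk₁ = sup_{x∈X₁,p∈P_γ} Prob{T₁(x+ξ)=2} ≤ P_γ(δ) and Risk₂ = sup_{x∈X₂,p∈P_γ} Prob{T₁(x+ξ)=1} ≤ P_γ(δ). -/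
open MeasureTheory Matrix
open scoped Classical

noncomputable section

lemma dotSelf_nonneg {n : ℕ} (v : Fin n → ℝ) : 0 ≤ v ⬝ᵥ v :=
  Finset.sum_nonneg fun i _ => mul_self_nonneg (v i)

/-- Variational inequality: if `x0` minimizes squared distance to `z` over convex `X`,
then `(x0 - z) ⬝ᵥ (y - x0) ≥ 0` for all `y ∈ X`. -/
lemma varIneq {n : ℕ} {X : Set (Fin n → ℝ)} (hcv : Convex ℝ X)
    {x0 z : Fin n → ℝ} (hx0 : x0 ∈ X)
    (hmin : ∀ w ∈ X, (x0 - z) ⬝ᵥ (x0 - z) ≤ (w - z) ⬝ᵥ (w - z))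
    {y : Fin n → ℝ} (hy : y ∈ X) : 0 ≤ (x0 - z) ⬝ᵥ (y - x0) := by
  by_contra hlt
  push_neg at hlt
  set a := (x0 - z) ⬝ᵥ (y - x0) with ha
  set b := (y - x0) ⬝ᵥ (y - x0) with hb
  have hb0 : 0 ≤ b := dotSelf_nonneg _
  rcases eq_or_lt_of_le hb0 with hb0' | hbpos
  · have : y - x0 = 0 := dotProduct_self_eq_zero.mp hb0'.symm
    have : a = 0 := by rw [ha, this, dotProduct_zero]
    linarith
  · set t : ℝ := min 1 (-a / b) with htdef
    have ht0 : 0 < t := lt_min one_pos (div_pos (neg_pos.mpr hlt) hbpos)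
    have ht1 : t ≤ 1 := min_le_left _ _
    have htb : t * b ≤ -a := by
      have : t ≤ -a / b := min_le_right _ _
      calc t * b ≤ (-a / b) * b := by nlinarith
        _ = -a := by field_simp
    have hmem : (1 - t) • x0 + t • y ∈ X :=
      hcv hx0 hy (by linarith) ht0.le (by ring)
    have hrw : (1 - t) • x0 + t • y = x0 + t • (y - x0) := by
      ext i; simp [smul_eq_mul]; ring
    rw [hrw] at hmem
    have hineq := hmin _ hmem
    have hexp : (x0 + t • (y - x0) - z) ⬝ᵥ (x0 + t • (y - x0) - z)
        = (x0 - z) ⬝ᵥ (x0 - z) + t * a + t * a + t * t * b := by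
      have h1 : x0 + t • (y - x0) - z = (x0 - z) + t • (y - x0) := by
        ext i; simp [smul_eq_mul]; ring
      rw [h1]
      simp only [add_dotProduct, dotProduct_add, smul_dotProduct, dotProduct_smul,
        smul_eq_mul, ha, hb]
      rw [dotProduct_comm (y - x0) (x0 - z)]
      ring
    rw [hexp] at hineq
    nlinarith

/-- risk bounds for the Euclidean separation test on a sub-spherical family.
With minimizers `x1 ∈ X₁`, `x2 ∈ X₂` of the Euclidean distance, `δ = ½‖x1 − x2‖₂`,
`h = (x1 − x2)/‖x1 − x2‖₂`, `c = ½ h·(x1 + x2)`, `s*(ω) = h·ω − c`, and `α₁, α₂ ≥ 0`,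
`α₁ + α₂ ≤ 2δ`: (i)–(ii) the stated tail bounds, and, in particular (`α₁ = α₂ = δ`),
both risks of the test accepting `H₁` iff `s*(ω) ≥ 0` are at most `P_γ(δ)`. -/
theorem statement6 {n : ℕ} (γ : ℝ → ℝ) (hγ : IsSpec γ)
    (X₁ X₂ : Set (Fin n → ℝ))
    (hne1 : X₁.Nonempty) (hne2 : X₂.Nonempty)
    (hcv1 : Convex ℝ X₁) (hcv2 : Convex ℝ X₂)
    (hcl1 : IsClosed X₁) (hcl2 : IsClosed X₂)
    (hbd : Bornology.IsBounded X₁ ∨ Bornology.IsBounded X₂)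
    (hdisj : Disjoint X₁ X₂)
    (x1 x2 : Fin n → ℝ) (hx1 : x1 ∈ X₁) (hx2 : x2 ∈ X₂)
    (hmin : ∀ y1 ∈ X₁, ∀ y2 ∈ X₂,
      (x1 - x2) ⬝ᵥ (x1 - x2) ≤ (y1 - y2) ⬝ᵥ (y1 - y2))
    (δ : ℝ) (hδ : δ = Real.sqrt ((x1 - x2) ⬝ᵥ (x1 - x2)) / 2)
    (h : Fin n → ℝ) (hh : h = (Real.sqrt ((x1 - x2) ⬝ᵥ (x1 - x2)))⁻¹ • (x1 - x2))
    (c : ℝ) (hc : c = h ⬝ᵥ (x1 + x2) / 2)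
    (α₁ α₂ : ℝ) (hα1 : 0 ≤ α₁) (hα2 : 0 ≤ α₂) (hαs : α₁ + α₂ ≤ 2 * δ) :
    (∀ x ∈ X₁, ∀ p : (Fin n → ℝ) → ℝ, SubSpherical γ p →
      (∫ ξ in {ξ | h ⬝ᵥ (x + ξ) - c < (α₂ - α₁) / 2}, p ξ) ≤ tailP γ α₁) ∧
    (∀ x ∈ X₂, ∀ p : (Fin n → ℝ) → ℝ, SubSpherical γ p →
      (∫ ξ in {ξ | (α₂ - α₁) / 2 ≤ h ⬝ᵥ (x + ξ) - c}, p ξ) ≤ tailP γ α₂) ∧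
    (∀ x ∈ X₁, ∀ p : (Fin n → ℝ) → ℝ, SubSpherical γ p →
      (∫ ξ in {ξ | h ⬝ᵥ (x + ξ) - c < 0}, p ξ) ≤ tailP γ δ) ∧
    (∀ x ∈ X₂, ∀ p : (Fin n → ℝ) → ℝ, SubSpherical γ p →
      (∫ ξ in {ξ | 0 ≤ h ⬝ᵥ (x + ξ) - c}, p ξ) ≤ tailP γ δ)  := by
  -- Setup
  have hx12 : x1 ≠ x2 := fun he => Set.disjoint_left.mp hdisj hx1 (he ▸ hx2)
  set d : ℝ := (x1 - x2) ⬝ᵥ (x1 - x2) with hd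
  have hdpos : 0 < d := by
    rcases eq_or_lt_of_le (dotSelf_nonneg (x1 - x2)) with h0 | h0
    · exact absurd (sub_eq_zero.mp (dotProduct_self_eq_zero.mp h0.symm)) hx12
    · exact h0
  set r : ℝ := Real.sqrt d with hrdef
  have hrpos : 0 < r := Real.sqrt_pos.mpr hdpos
  have hr2 : r * r = d := Real.mul_self_sqrt hdpos.le
  have hδpos : 0 < δ := by rw [hδ]; positivity
  have hδr : δ = r / 2 := hδ
  -- h ⬝ᵥ h = 1
  have hh1 : h ⬝ᵥ h = 1 := by
    rw [hh]
    simp only [smul_dotProduct, dotProduct_smul, smul_eq_mul, ← hd, ← hrdef]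
    field_simp
    nlinarith
  -- h ⬝ᵥ (x1 - x2) = r
  have hhx12 : h ⬝ᵥ (x1 - x2) = r := by
    rw [hh]
    simp only [smul_dotProduct, smul_eq_mul, ← hd, ← hrdef]
    field_simp
    nlinarith
  -- for x ∈ X₁ : δ ≤ h ⬝ᵥ x - c
  have hX1 : ∀ x ∈ X₁, δ ≤ h ⬝ᵥ x - c := by
    intro x hx
    have hv : 0 ≤ (x1 - x2) ⬝ᵥ (x - x1) := varIneq hcv1 hx1
      (fun w hw => hmin w hw x2 hx2) hx
    have hhv : 0 ≤ h ⬝ᵥ (x - x1) := by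
      rw [hh]; simp only [smul_dotProduct, smul_eq_mul]
      positivity
    have e1 : h ⬝ᵥ (x - x1) = h ⬝ᵥ x - h ⬝ᵥ x1 := by
      simp [sub_eq_add_neg, dotProduct_add, dotProduct_neg]
    have e2 : h ⬝ᵥ (x1 - x2) = h ⬝ᵥ x1 - h ⬝ᵥ x2 := by
      simp [sub_eq_add_neg, dotProduct_add, dotProduct_neg]
    have e3 : h ⬝ᵥ (x1 + x2) = h ⬝ᵥ x1 + h ⬝ᵥ x2 := by simp [dotProduct_add]
    rw [e1] at hhv
    rw [e2] at hhx12
    rw [hc, e3, hδr]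
    linarith
  -- for x ∈ X₂ : h ⬝ᵥ x - c ≤ -δ
  have hX2 : ∀ x ∈ X₂, h ⬝ᵥ x - c ≤ -δ := by
    intro x hx
    have hmin' : ∀ w ∈ X₂, (x2 - x1) ⬝ᵥ (x2 - x1) ≤ (w - x1) ⬝ᵥ (w - x1) := by
      intro w hw
      have h1 : (x2 - x1) ⬝ᵥ (x2 - x1) = (x1 - x2) ⬝ᵥ (x1 - x2) := by
        rw [show x2 - x1 = -(x1 - x2) by ring, neg_dotProduct, dotProduct_neg, neg_neg]
      have h2 : (w - x1) ⬝ᵥ (w - x1) = (x1 - w) ⬝ᵥ (x1 - w) := by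
        rw [show x1 - w = -(w - x1) by ring, neg_dotProduct, dotProduct_neg, neg_neg]
      rw [h1, h2]
      exact hmin x1 hx1 w hw
    have hv : 0 ≤ (x2 - x1) ⬝ᵥ (x - x2) := varIneq hcv2 hx2 hmin' hx
    have hv' : (x1 - x2) ⬝ᵥ (x - x2) ≤ 0 := by
      have : (x2 - x1) ⬝ᵥ (x - x2) = -((x1 - x2) ⬝ᵥ (x - x2)) := by
        rw [show x2 - x1 = -(x1 - x2) by ring, neg_dotProduct]
      linarith [this ▸ hv]
    have hhv : h ⬝ᵥ (x - x2) ≤ 0 := by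
      rw [hh]; simp only [smul_dotProduct, smul_eq_mul]
      have : 0 ≤ r⁻¹ := by positivity
      nlinarith
    have e1 : h ⬝ᵥ (x - x2) = h ⬝ᵥ x - h ⬝ᵥ x2 := by
      simp [sub_eq_add_neg, dotProduct_add, dotProduct_neg]
    have e2 : h ⬝ᵥ (x1 - x2) = h ⬝ᵥ x1 - h ⬝ᵥ x2 := by
      simp [sub_eq_add_neg, dotProduct_add, dotProduct_neg]
    have e3 : h ⬝ᵥ (x1 + x2) = h ⬝ᵥ x1 + h ⬝ᵥ x2 := by simp [dotProduct_add]
    rw [e1] at hhv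
    rw [e2] at hhx12
    rw [hc, e3, hδr]
    linarith
  -- basic facts about any subspherical p
  have hInt : ∀ p : (Fin n → ℝ) → ℝ, SubSpherical γ p → Integrable p := by
    intro p hp
    by_contra hni
    have := hp.1.2
    rw [integral_undef hni] at this
    norm_num at this
  have hmono : ∀ p : (Fin n → ℝ) → ℝ, SubSpherical γ p →
      ∀ A B : Set (Fin n → ℝ), A ⊆ B →
      (∫ ξ in A, p ξ) ≤ ∫ ξ in B, p ξ := by
    intro p hp A B hAB
    exact setIntegral_mono_set ((hInt p hp).integrableOn)
      (Filter.Eventually.of_forall hp.1.1) (HasSubset.Subset.eventuallyLE hAB)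
  have hneg : ∀ p : (Fin n → ℝ) → ℝ, SubSpherical γ p →
      ∀ S : Set (Fin n → ℝ),
      (∫ ξ in Neg.neg ⁻¹' S, p ξ) = ∫ ξ in S, p ξ := by
    intro p hp S
    have h1 : (∫ ξ in Neg.neg ⁻¹' S, p ξ) = ∫ ξ in Neg.neg ⁻¹' S, p (-ξ) :=
      integral_congr_ae (Filter.Eventually.of_forall fun ξ => (hp.2.1 ξ).symm)
    rw [h1]
    exact (Measure.measurePreserving_neg volume).setIntegral_preimage_emb
      (Homeomorph.neg (Fin n → ℝ)).measurableEmbedding p S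
  -- the two general claims
  have claim1 : ∀ β₁ β₂ : ℝ, 0 ≤ β₁ → β₁ + β₂ ≤ 2 * δ →
      ∀ x ∈ X₁, ∀ p : (Fin n → ℝ) → ℝ, SubSpherical γ p →
      (∫ ξ in {ξ | h ⬝ᵥ (x + ξ) - c < (β₂ - β₁) / 2}, p ξ) ≤ tailP γ β₁ := by
    intro β₁ β₂ hβ1 hβs x hx p hp
    have hsub : {ξ : Fin n → ℝ | h ⬝ᵥ (x + ξ) - c < (β₂ - β₁) / 2}
        ⊆ Neg.neg ⁻¹' {ξ : Fin n → ℝ | β₁ ≤ h ⬝ᵥ ξ} := by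
      intro ξ hξ
      simp only [Set.mem_setOf_eq] at hξ
      simp only [Set.mem_preimage, Set.mem_setOf_eq, dotProduct_neg]
      have e1 : h ⬝ᵥ (x + ξ) = h ⬝ᵥ x + h ⬝ᵥ ξ := by simp [dotProduct_add]
      have := hX1 x hx
      rw [e1] at hξ
      linarith
    calc (∫ ξ in {ξ | h ⬝ᵥ (x + ξ) - c < (β₂ - β₁) / 2}, p ξ)
        ≤ ∫ ξ in Neg.neg ⁻¹' {ξ : Fin n → ℝ | β₁ ≤ h ⬝ᵥ ξ}, p ξ := hmono p hp _ _ hsub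
      _ = ∫ ξ in {ξ : Fin n → ℝ | β₁ ≤ h ⬝ᵥ ξ}, p ξ := hneg p hp _
      _ ≤ tailP γ β₁ := hp.2.2 h hh1 β₁ hβ1
  have claim2 : ∀ β₁ β₂ : ℝ, 0 ≤ β₂ → β₁ + β₂ ≤ 2 * δ →
      ∀ x ∈ X₂, ∀ p : (Fin n → ℝ) → ℝ, SubSpherical γ p →
      (∫ ξ in {ξ | (β₂ - β₁) / 2 ≤ h ⬝ᵥ (x + ξ) - c}, p ξ) ≤ tailP γ β₂ := by
    intro β₁ β₂ hβ2 hβs x hx p hp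
    have hsub : {ξ : Fin n → ℝ | (β₂ - β₁) / 2 ≤ h ⬝ᵥ (x + ξ) - c}
        ⊆ {ξ : Fin n → ℝ | β₂ ≤ h ⬝ᵥ ξ} := by
      intro ξ hξ
      simp only [Set.mem_setOf_eq] at hξ ⊢
      have e1 : h ⬝ᵥ (x + ξ) = h ⬝ᵥ x + h ⬝ᵥ ξ := by simp [dotProduct_add]
      have := hX2 x hx
      rw [e1] at hξ
      linarith
    calc (∫ ξ in {ξ | (β₂ - β₁) / 2 ≤ h ⬝ᵥ (x + ξ) - c}, p ξ)
        ≤ ∫ ξ in {ξ : Fin n → ℝ | β₂ ≤ h ⬝ᵥ ξ}, p ξ := hmono p hp _ _ hsub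
      _ ≤ tailP γ β₂ := hp.2.2 h hh1 β₂ hβ2
  refine ⟨claim1 α₁ α₂ hα1 hαs, claim2 α₁ α₂ hα2 hαs, ?_, ?_⟩
  · intro x hx p hp
    have := claim1 δ δ hδpos.le (by linarith) x hx p hp
    simpa using this
  · intro x hx p hp
    have := claim2 δ δ hδpos.le (by linarith) x hx p hp
    simpa using this
end
end

section
/- Let P_γ be a monotone sub-spherical family on ℝⁿ with cap q, let X₁, X₂ ⊂ ℝⁿ be nonempty closed convex disjoint sets with at least one bounded, and let (x¹*, x²*) minimize ‖x¹ − x²‖₂ over X₁ × X₂ and δ = ½‖x¹* − x²*‖₂. Let p₁ and p₂ be the densities of x¹* + ξ and x²* + ξ, ξ ∼ q, i.e., p₁(ω) = q(ω − x¹*), p₂(ω) = q(ω − x²*). Then ∫ min[p₁(ω), p₂(ω)] dω = 2ε⋆, where ε⋆ = ∫_δ^∞ γ(s)ds. Consequently, every test T: ℝⁿ → {1,2} deciding on the two simple hypotheses x = x¹* and x = x²* from a single observation ω = x + ξ, ξ ∼ q, satisfies max(Prob_{ω ∼ p₁}{T(ω)=2}, Prob_{ω ∼ p₂}{T(ω)=1})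 ≥ ε⋆. -/
open MeasureTheory Matrix
open scoped Classical

noncomputable section

/-- `q` is a cap of the sub-spherical family `P_γ^n`: a spherically symmetric member with
nonincreasing profile whose one-dimensional projections have density exactly `γ`. -/
def IsCap {n : ℕ} (γ : ℝ → ℝ) (q : (Fin n → ℝ) → ℝ) : Prop :=
  SubSpherical γ q ∧
  (∃ f : ℝ → ℝ, AntitoneOn f (Set.Ici 0) ∧ ∀ x, q x = f (Real.sqrt (x ⬝ᵥ x))) ∧
  ∀ e : Fin n → ℝ, e ⬝ᵥ e = 1 →
    Measure.map (fun ξ => e ⬝ᵥ ξ) (dMeas q) = dMeas1 γ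


/-! ### Auxiliary lemmas -/

private lemma integrable_of_integral_eq_one' {α : Type*} [MeasureSpace α] {p : α → ℝ}
    (h : (∫ x, p x) = 1) : Integrable p := by
  by_contra hI
  rw [MeasureTheory.integral_undef hI] at h
  norm_num at h

private lemma setIntegral_eq_withDensity' {α : Type*} [MeasureSpace α] {q : α → ℝ}
    (hpos : ∀ x, 0 ≤ q x) (hm : AEStronglyMeasurable q volume)
    {A : Set α} (hA : MeasurableSet A) :
    (∫ x in A, q x) = ((volume.withDensity fun x => ENNReal.ofReal (q x)) A).toReal := by
  rw [MeasureTheory.withDensity_apply _ hA,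
    MeasureTheory.integral_eq_lintegral_of_nonneg_ae
      (Filter.Eventually.of_forall hpos) hm.restrict]

private lemma measurable_dot' {n : ℕ} (e : Fin n → ℝ) :
    Measurable fun ξ : Fin n → ℝ => e ⬝ᵥ ξ := by
  simp only [dotProduct]
  exact Finset.measurable_sum _ fun i _ => measurable_const.mul (measurable_pi_apply i)

private lemma cap_halfspace' {n : ℕ} {γ : ℝ → ℝ} {q : (Fin n → ℝ) → ℝ}
    (hγpos : ∀ s, 0 ≤ γ s) (hγm : AEStronglyMeasurable γ volume)
    (hqpos : ∀ x, 0 ≤ q x) (hqm : AEStronglyMeasurable q volume)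
    (hmap : ∀ e : Fin n → ℝ, e ⬝ᵥ e = 1 →
      Measure.map (fun ξ => e ⬝ᵥ ξ) (dMeas q) = dMeas1 γ)
    {e : Fin n → ℝ} (he : e ⬝ᵥ e = 1) {S : Set ℝ} (hS : MeasurableSet S) :
    (∫ ξ in {ξ | e ⬝ᵥ ξ ∈ S}, q ξ) = ∫ s in S, γ s := by
  have hpre : MeasurableSet {ξ : Fin n → ℝ | e ⬝ᵥ ξ ∈ S} := (measurable_dot' e) hS
  rw [setIntegral_eq_withDensity' hqpos hqm hpre, setIntegral_eq_withDensity' hγpos hγm hS]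
  congr 1
  have h1 : {ξ : Fin n → ℝ | e ⬝ᵥ ξ ∈ S} = (fun ξ => e ⬝ᵥ ξ) ⁻¹' S := rfl
  have h2 : (volume.withDensity fun x => ENNReal.ofReal (q x)) = dMeas q := rfl
  have h3 : (volume.withDensity fun s => ENNReal.ofReal (γ s)) = dMeas1 γ := rfl
  rw [h1, h2, h3, ← Measure.map_apply (measurable_dot' e) hS, hmap e he]

private lemma setIntegral_shift' {n : ℕ} {q : (Fin n → ℝ) → ℝ}
    (v : Fin n → ℝ) {B : Set (Fin n → ℝ)} (hB : MeasurableSet B) :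
    (∫ ω in B, q (ω - v)) = ∫ ξ in (fun ξ => ξ + v) ⁻¹' B, q ξ := by
  have hA : MeasurableSet ((fun ξ : Fin n → ℝ => ξ + v) ⁻¹' B) :=
    (measurable_add_const v) hB
  rw [← MeasureTheory.integral_indicator hB, ← MeasureTheory.integral_indicator hA]
  have hpt : ∀ ω, B.indicator (fun ω => q (ω - v)) ω
      = ((fun ξ : Fin n → ℝ => ξ + v) ⁻¹' B).indicator q (ω - v) := by
    intro ω
    by_cases h : ω ∈ B
    · rw [Set.indicator_of_mem h, Set.indicator_of_mem]
      simpa using h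
    · rw [Set.indicator_of_notMem h, Set.indicator_of_notMem]
      simpa using h
  simp_rw [hpt]
  exact MeasureTheory.integral_sub_right_eq_self _ v

/-- optimality for monotone sub-spherical families. For the cap `q` and the
minimizers `x1, x2`, the densities `p₁(ω) = q(ω − x1)`, `p₂(ω) = q(ω − x2)` satisfy
`∫ min(p₁, p₂) = 2ε⋆` with `ε⋆ = ∫_δ^∞ γ`, and every single-observation test deciding on
`x = x1` vs `x = x2` (value `true` = accept `H₁ : x = x1`) has maximal risk at least `ε⋆`. -/
theorem statement7 {n : ℕ} (γ : ℝ → ℝ) (hγ : IsSpec γ)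
    (q : (Fin n → ℝ) → ℝ) (hq : IsCap γ q)
    (X₁ X₂ : Set (Fin n → ℝ))
    (hne1 : X₁.Nonempty) (hne2 : X₂.Nonempty)
    (hcv1 : Convex ℝ X₁) (hcv2 : Convex ℝ X₂)
    (hcl1 : IsClosed X₁) (hcl2 : IsClosed X₂)
    (hbd : Bornology.IsBounded X₁ ∨ Bornology.IsBounded X₂)
    (hdisj : Disjoint X₁ X₂)
    (x1 x2 : Fin n → ℝ) (hx1 : x1 ∈ X₁) (hx2 : x2 ∈ X₂)
    (hmin : ∀ y1 ∈ X₁, ∀ y2 ∈ X₂,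
      (x1 - x2) ⬝ᵥ (x1 - x2) ≤ (y1 - y2) ⬝ᵥ (y1 - y2))
    (δ : ℝ) (hδ : δ = Real.sqrt ((x1 - x2) ⬝ᵥ (x1 - x2)) / 2) :
    (∫ ω, min (q (ω - x1)) (q (ω - x2))) = 2 * tailP γ δ ∧
    ∀ T : (Fin n → ℝ) → Bool, Measurable T →
      tailP γ δ ≤ max (∫ ω in {ω | T ω = false}, q (ω - x1))
                      (∫ ω in {ω | T ω = true}, q (ω - x2)) := by
  classical
  obtain ⟨⟨⟨hqpos, hqint1⟩, hqeven, _⟩, ⟨f, hf, hqf⟩, hmap⟩ := hq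
  obtain ⟨⟨hγpos, hγint1⟩, hγeven, _⟩ := hγ
  have hqint : Integrable q := integrable_of_integral_eq_one' hqint1
  have hγint : Integrable γ := integrable_of_integral_eq_one' hγint1
  have hx12 : x1 ≠ x2 := fun h => (Set.disjoint_left.mp hdisj hx1) (h ▸ hx2)
  set d : Fin n → ℝ := x2 - x1 with hd
  have hd0 : d ≠ 0 := sub_ne_zero.mpr (Ne.symm hx12)
  have hddnn : 0 ≤ d ⬝ᵥ d := Finset.sum_nonneg fun i _ => mul_self_nonneg _
  have hdd : 0 < d ⬝ᵥ d :=
    lt_of_le_of_ne hddnn fun h => hd0 (dotProduct_self_eq_zero.mp h.symm)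
  set ρ : ℝ := Real.sqrt (d ⬝ᵥ d) with hρdef
  have hρ : 0 < ρ := Real.sqrt_pos.mpr hdd
  have hρ2 : ρ * ρ = d ⬝ᵥ d := Real.mul_self_sqrt hddnn
  have hδρ : δ = ρ / 2 := by
    rw [hδ, hρdef]
    congr 2
    have h12 : x1 - x2 = -d := by rw [hd]; abel
    rw [h12, neg_dotProduct, dotProduct_neg, neg_neg]
  have hδpos : 0 < δ := by rw [hδρ]; positivity
  set e : Fin n → ℝ := ρ⁻¹ • d with hedef
  have hedot : ∀ w : Fin n → ℝ, e ⬝ᵥ w = ρ⁻¹ * (d ⬝ᵥ w) := by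
    intro w; rw [hedef, smul_dotProduct]; rfl
  have hed : e ⬝ᵥ d = ρ := by
    rw [hedot, ← hρ2]; field_simp
  have he : e ⬝ᵥ e = 1 := by
    rw [hedot, hedef, dotProduct_smul, smul_eq_mul, ← hρ2]
    field_simp
  have hex2 : e ⬝ᵥ x2 = e ⬝ᵥ x1 + ρ := by
    have : e ⬝ᵥ (x2 - x1) = e ⬝ᵥ x2 - e ⬝ᵥ x1 := by rw [dotProduct_sub]
    rw [← hd] at this
    rw [hed] at this
    linarith
  -- monotonicity of q along the radius
  have hmono : ∀ u w : Fin n → ℝ, u ⬝ᵥ u ≤ w ⬝ᵥ w → q w ≤ q u := by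
    intro u w h
    rw [hqf u, hqf w]
    exact hf (Set.mem_Ici.mpr (Real.sqrt_nonneg _)) (Set.mem_Ici.mpr (Real.sqrt_nonneg _))
      (Real.sqrt_le_sqrt h)
  -- key quadratic identity
  have key : ∀ ω : Fin n → ℝ, (ω - x2) ⬝ᵥ (ω - x2)
      = (ω - x1) ⬝ᵥ (ω - x1) - 2 * ρ * (e ⬝ᵥ ω - e ⬝ᵥ x1) + ρ * ρ := by
    intro ω
    have h1 : ω - x2 = (ω - x1) - d := by rw [hd]; abel
    have h2 : e ⬝ᵥ (ω - x1) = e ⬝ᵥ ω - e ⬝ᵥ x1 := by rw [dotProduct_sub]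
    have h3 : d ⬝ᵥ (ω - x1) = ρ * (e ⬝ᵥ (ω - x1)) := by
      rw [hedot]; field_simp
    have h4 : (ω - x1) ⬝ᵥ d = ρ * (e ⬝ᵥ (ω - x1)) := by
      rw [dotProduct_comm]; exact h3
    have expand : (ω - x1 - d) ⬝ᵥ (ω - x1 - d)
        = (ω - x1) ⬝ᵥ (ω - x1) - (ω - x1) ⬝ᵥ d - d ⬝ᵥ (ω - x1) + d ⬝ᵥ d := by
      simp only [dotProduct_sub, sub_dotProduct]
      ring
    rw [h1, expand, h3, h4, h2, ← hρ2]
    ring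
  set c : ℝ := e ⬝ᵥ x1 + δ with hc
  set H : Set (Fin n → ℝ) := {ω | e ⬝ᵥ ω ≤ c} with hHdef
  have hH : MeasurableSet H := (measurable_dot' e) measurableSet_Iic
  -- pointwise identification of the min
  have hminH : ∀ ω ∈ H, min (q (ω - x1)) (q (ω - x2)) = q (ω - x2) := by
    intro ω hω
    apply min_eq_right
    apply hmono
    have hE : e ⬝ᵥ ω - e ⬝ᵥ x1 ≤ δ := by
      have := hω; simp only [hHdef, Set.mem_setOf_eq, hc] at this; linarith
    rw [key ω]
    nlinarith [hρ, hδρ]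
  have hminHc : ∀ ω ∈ Hᶜ, min (q (ω - x1)) (q (ω - x2)) = q (ω - x1) := by
    intro ω hω
    apply min_eq_left
    apply hmono
    have hE : δ ≤ e ⬝ᵥ ω - e ⬝ᵥ x1 := by
      have := hω; simp only [hHdef, Set.mem_compl_iff, Set.mem_setOf_eq, hc, not_le] at this
      linarith
    rw [key ω]
    nlinarith [hρ, hδρ]
  -- integrability
  have hq1 : Integrable fun ω : Fin n → ℝ => q (ω - x1) := hqint.comp_sub_right x1
  have hq2 : Integrable fun ω : Fin n → ℝ => q (ω - x2) := hqint.comp_sub_right x2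
  have hmin_int : Integrable fun ω : Fin n → ℝ => min (q (ω - x1)) (q (ω - x2)) := by
    refine hq1.mono ((hq1.aemeasurable.min hq2.aemeasurable).aestronglyMeasurable) ?_
    refine Filter.Eventually.of_forall fun ω => ?_
    rw [Real.norm_eq_abs, Real.norm_eq_abs, abs_of_nonneg (le_min (hqpos _) (hqpos _)),
      abs_of_nonneg (hqpos _)]
    exact min_le_left _ _
  -- the two half-space integrals
  have e2 : (∫ ω in H, q (ω - x2)) = tailP γ δ := by
    rw [setIntegral_shift' x2 hH]
    have hset : (fun ξ : Fin n → ℝ => ξ + x2) ⁻¹' H = {ξ | (-e) ⬝ᵥ ξ ∈ Set.Ici δ} := by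
      ext ξ
      simp only [Set.mem_preimage, hHdef, Set.mem_setOf_eq, hc, dotProduct_add, hex2,
        neg_dotProduct, Set.mem_Ici]
      constructor <;> intro h <;> [skip; skip] <;> · rw [hδρ] at *; linarith [hδρ]
    have hene : (-e) ⬝ᵥ (-e) = 1 := by rw [neg_dotProduct, dotProduct_neg, neg_neg, he]
    rw [hset, cap_halfspace' hγpos hγint.aestronglyMeasurable hqpos hqint.aestronglyMeasurable
      hmap hene measurableSet_Ici, tailP]
  have e4 : (∫ ω in Hᶜ, q (ω - x1)) = tailP γ δ := by
    rw [setIntegral_shift' x1 hH.compl]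
    have hset : (fun ξ : Fin n → ℝ => ξ + x1) ⁻¹' Hᶜ = {ξ | e ⬝ᵥ ξ ∈ Set.Ioi δ} := by
      ext ξ
      simp only [Set.mem_preimage, Set.mem_compl_iff, hHdef, Set.mem_setOf_eq, hc,
        dotProduct_add, not_le, Set.mem_Ioi]
      constructor <;> intro h <;> linarith
    rw [hset, cap_halfspace' hγpos hγint.aestronglyMeasurable hqpos hqint.aestronglyMeasurable
      hmap he measurableSet_Ioi, tailP, MeasureTheory.integral_Ici_eq_integral_Ioi]
  have hsplit : (∫ ω in H, min (q (ω - x1)) (q (ω - x2)))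
      + (∫ ω in Hᶜ, min (q (ω - x1)) (q (ω - x2)))
      = ∫ ω, min (q (ω - x1)) (q (ω - x2)) := MeasureTheory.integral_add_compl hH hmin_int
  have e1 : (∫ ω in H, min (q (ω - x1)) (q (ω - x2))) = ∫ ω in H, q (ω - x2) :=
    MeasureTheory.setIntegral_congr_fun hH fun ω hω => hminH ω hω
  have e3 : (∫ ω in Hᶜ, min (q (ω - x1)) (q (ω - x2))) = ∫ ω in Hᶜ, q (ω - x1) :=
    MeasureTheory.setIntegral_congr_fun hH.compl fun ω hω => hminHc ω hω
  have hmain : (∫ ω, min (q (ω - x1)) (q (ω - x2))) = 2 * tailP γ δ := by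
    rw [← hsplit, e1, e3, e2, e4]; ring
  refine ⟨hmain, ?_⟩
  intro T hT
  set s : Set (Fin n → ℝ) := {ω | T ω = true} with hsdef
  have hs : MeasurableSet s := hT (measurableSet_singleton true)
  have hsc : sᶜ = {ω | T ω = false} := by
    ext ω; simp [hsdef]
  have hle2 : (∫ ω in s, min (q (ω - x1)) (q (ω - x2))) ≤ ∫ ω in s, q (ω - x2) :=
    MeasureTheory.setIntegral_mono_on hmin_int.integrableOn hq2.integrableOn hs
      fun ω _ => min_le_right _ _
  have hle1 : (∫ ω in sᶜ, min (q (ω - x1)) (q (ω - x2))) ≤ ∫ ω in sᶜ, q (ω - x1) :=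
    MeasureTheory.setIntegral_mono_on hmin_int.integrableOn hq1.integrableOn hs.compl
      fun ω _ => min_le_left _ _
  have hsum : (∫ ω in s, min (q (ω - x1)) (q (ω - x2)))
      + (∫ ω in sᶜ, min (q (ω - x1)) (q (ω - x2)))
      = 2 * tailP γ δ := by
    rw [MeasureTheory.integral_add_compl hs hmin_int, hmain]
  have hA : (∫ ω in {ω | T ω = false}, q (ω - x1)) = ∫ ω in sᶜ, q (ω - x1) := by rw [hsc]
  have hB : (∫ ω in {ω | T ω = true}, q (ω - x2)) = ∫ ω in s, q (ω - x2) := by rfl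
  rw [hA, hB]
  have h1' := le_max_left (∫ ω in sᶜ, q (ω - x1)) (∫ ω in s, q (ω - x2))
  have h2' := le_max_right (∫ ω in sᶜ, q (ω - x1)) (∫ ω in s, q (ω - x2))
  linarith
end
end

section
/- Let P_γ be a sub-spherical family on ℝⁿ, and let β, d̄ > 0 satisfy βd̄ ≤ ½ and ∫_0^δ γ(s)ds ≥ βδ for all 0 ≤ δ ≤ d̄. Let X₁, X₂ ⊂ ℝⁿ be nonempty closed convex disjoint sets with at least one bounded such that δ := ½ min_{x¹∈X₁, x²∈X₂} ‖x¹ − x²‖₂ satisfies δ ≤ d̄. Then the risk of the K-observation majority test T^maj_K (which, given ω_k = x + ξ_k, k = 1,…,K, with ξ_k i.i.d. ∼ p ∈ P_γ, accepts H₁ : x ∈ X₁ when s*(ω_k) ≥ 0 for at least K/2 values of k, and accepts H₂ : x ∈ X₂ otherwise) satisfies Risk(T^maj_K) ≤ exp{−2Kβ²δ²}. In particular, for every ε ∈ (0,1), if K ≥ ⌈ln(1/ε)/(2β²δ²)⌉ then Risk(T^maj_K) ≤ ε. -/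
open MeasureTheory Matrix Finset
open scoped Classical ENNReal

noncomputable section

section Aux

lemma stepB' {q t : ℝ} (hq0 : 0 ≤ q) (hq : q ≤ 1/2 - t) (ht : 0 ≤ t) :
    2 * Real.sqrt (q * (1 - q)) ≤ Real.exp (-(2 * t^2)) := by
  have h1 : q * (1 - q) ≤ 1/4 - t^2 := by nlinarith [sq_nonneg t]
  have h2 : (1:ℝ) - 4 * t^2 ≤ Real.exp (-(4 * t^2)) := by
    have := Real.add_one_le_exp (-(4 * t^2)); linarith
  have h3 : 2 * Real.sqrt (q * (1 - q)) = Real.sqrt (4 * (q * (1 - q))) := by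
    rw [show (4:ℝ) * (q * (1-q)) = (2 * Real.sqrt (q * (1-q)))^2 by
      rw [mul_pow, Real.sq_sqrt (by nlinarith)]; ring, Real.sqrt_sq (by positivity)]
  rw [h3]
  calc Real.sqrt (4 * (q * (1 - q))) ≤ Real.sqrt (Real.exp (-(4 * t^2))) := by
        apply Real.sqrt_le_sqrt; linarith
    _ = Real.exp (-(2 * t^2)) := by
        rw [show -(4*t^2) = (2:ℕ) * (-(2*t^2)) by push_cast; ring, Real.exp_nat_mul,
          Real.sqrt_sq (Real.exp_nonneg _)]

lemma stepA' {q : ℝ} (hq0 : 0 ≤ q) (hq : q ≤ 1/2) {K j : ℕ} (hKj : K ≤ 2 * j) (hjK : j ≤ K) :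
    q ^ j * (1 - q) ^ (K - j) ≤ Real.sqrt (q * (1 - q)) ^ K := by
  have h1q : (0:ℝ) ≤ 1 - q := by linarith
  have hsq : Real.sqrt (q * (1-q)) ^ 2 = q * (1 - q) := Real.sq_sqrt (by positivity)
  have hle : q ≤ 1 - q := by linarith
  have key : (q ^ j * (1 - q) ^ (K - j))^2 ≤ (Real.sqrt (q * (1-q)) ^ K)^2 := by
    have : (Real.sqrt (q * (1-q)) ^ K)^2 = (q * (1-q))^K := by
      rw [← pow_mul, mul_comm K 2, pow_mul, hsq]
    rw [this, mul_pow, ← pow_mul, ← pow_mul, mul_pow]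
    set d := 2 * j - K with hd
    have h2j : j * 2 = K + d := by omega
    have h2Kj : (K - j) * 2 = K - d := by omega
    have hdK : d ≤ K := by omega
    rw [h2j, h2Kj, pow_add]
    have e1 : (1 - q) ^ K = (1-q)^(K-d) * (1-q)^d := by rw [← pow_add]; congr 1; omega
    rw [e1]
    have : q ^ d ≤ (1 - q) ^ d := pow_le_pow_left₀ hq0 hle d
    calc q ^ K * q ^ d * (1-q) ^ (K - d) ≤ q ^ K * (1-q) ^ d * (1-q)^(K-d) := by
          apply mul_le_mul_of_nonneg_right _ (by positivity)
          exact mul_le_mul_of_nonneg_left this (by positivity)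
      _ = q ^ K * ((1-q)^(K-d) * (1-q)^d) := by ring
  have h0l : 0 ≤ q ^ j * (1 - q) ^ (K - j) := by positivity
  have h0r : 0 ≤ Real.sqrt (q * (1-q)) ^ K := by positivity
  nlinarith [key]

lemma termBound' {q t : ℝ} (hq0 : 0 ≤ q) (hq : q ≤ 1/2 - t) (ht : 0 ≤ t)
    {K j : ℕ} (hKj : K ≤ 2 * j) (hjK : j ≤ K) :
    q ^ j * (1 - q) ^ (K - j) ≤ (Real.exp (-(2 * t^2)) / 2) ^ K := by
  calc q ^ j * (1 - q) ^ (K - j) ≤ Real.sqrt (q * (1 - q)) ^ K :=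
        stepA' hq0 (by linarith) hKj hjK
    _ ≤ (Real.exp (-(2 * t^2)) / 2) ^ K := by
        apply pow_le_pow_left₀ (Real.sqrt_nonneg _)
        have := stepB' hq0 hq ht; linarith

lemma masterBound' {α : Type*} [MeasurableSpace α] (μ : Measure α) [IsProbabilityMeasure μ]
    (K : ℕ) (B : Set α) (hB : MeasurableSet B) (t : ℝ) (ht : 0 ≤ t) (ht2 : t ≤ 1/2)
    (hq : μ B ≤ ENNReal.ofReal (1/2 - t)) :
    (Measure.pi fun _ : Fin K => μ) {ξ : Fin K → α | K ≤ 2 * (univ.filter fun k => ξ k ∈ B).card}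
      ≤ ENNReal.ofReal (Real.exp (-(2 * K * t^2))) := by
  set q : ℝ := (μ B).toReal with hqdef
  have hμB1 : μ B ≤ 1 := prob_le_one
  have hμBne : μ B ≠ ⊤ := (lt_of_le_of_lt hμB1 (by norm_num)).ne
  have hq0 : 0 ≤ q := ENNReal.toReal_nonneg
  have hqt : q ≤ 1/2 - t := by
    have := ENNReal.toReal_mono (by simp) hq
    rwa [ENNReal.toReal_ofReal (by linarith)] at this
  have hq1 : q ≤ 1 := by linarith
  have hμBq : μ B = ENNReal.ofReal q := (ENNReal.ofReal_toReal hμBne).symm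
  have hμBc : μ Bᶜ = ENNReal.ofReal (1 - q) := by
    rw [measure_compl hB hμBne, measure_univ, hμBq,
      ENNReal.ofReal_sub 1 hq0, ENNReal.ofReal_one]
  set 𝒮 : Finset (Finset (Fin K)) := univ.filter (fun S => K ≤ 2 * S.card) with h𝒮
  set C : Finset (Fin K) → Fin K → Set α := fun S k => if k ∈ S then B else Bᶜ with hC
  have hsub : {ξ : Fin K → α | K ≤ 2 * (univ.filter fun k => ξ k ∈ B).card} ⊆
      ⋃ S ∈ 𝒮, Set.pi Set.univ (C S) := by
    intro ξ hξ
    refine Set.mem_biUnion (show (univ.filter fun k => ξ k ∈ B) ∈ 𝒮 by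
      simp only [h𝒮, mem_filter, mem_univ, true_and]; exact hξ) ?_
    intro k _
    simp only [hC]
    by_cases hk : ξ k ∈ B
    · rw [if_pos (by simp [hk])]; exact hk
    · rw [if_neg (by simp [hk])]; exact hk
  set r : ℝ := Real.exp (-(2 * t^2)) / 2 with hr
  have hterm : ∀ S ∈ 𝒮, (Measure.pi fun _ : Fin K => μ) (Set.pi Set.univ (C S))
      ≤ ENNReal.ofReal (r ^ K) := by
    intro S hS
    have hcard : K ≤ 2 * S.card := by simpa [h𝒮] using hS
    have hjK : S.card ≤ K := by
      simpa using card_le_card (subset_univ S)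
    rw [Measure.pi_pi]
    have : ∀ k, μ (C S k) = if k ∈ S then ENNReal.ofReal q else ENNReal.ofReal (1-q) := by
      intro k; simp only [hC]; split <;> simp [hμBq, hμBc]
    rw [Finset.prod_congr rfl (fun k _ => this k), Finset.prod_ite, Finset.prod_const,
      Finset.prod_const]
    have e1 : (univ.filter (fun k => k ∈ S)) = S := by
      ext k; simp
    have e2 : (univ.filter (fun k => ¬ k ∈ S)).card = K - S.card := by
      have h := Finset.card_filter_add_card_filter_not
        (s := (univ : Finset (Fin K))) (p := fun k => k ∈ S)
      simp only [Finset.card_univ, Fintype.card_fin] at h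
      rw [e1] at h
      omega
    rw [e1, e2, ← ENNReal.ofReal_pow hq0, ← ENNReal.ofReal_pow (by linarith),
      ← ENNReal.ofReal_mul (by positivity)]
    exact ENNReal.ofReal_le_ofReal (termBound' hq0 hqt ht hcard hjK)
  calc (Measure.pi fun _ : Fin K => μ)
        {ξ : Fin K → α | K ≤ 2 * (univ.filter fun k => ξ k ∈ B).card}
      ≤ (Measure.pi fun _ : Fin K => μ) (⋃ S ∈ 𝒮, Set.pi Set.univ (C S)) :=
        measure_mono hsub
    _ ≤ ∑ S ∈ 𝒮, (Measure.pi fun _ : Fin K => μ) (Set.pi Set.univ (C S)) :=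
        measure_biUnion_finset_le 𝒮 _
    _ ≤ ∑ S ∈ 𝒮, ENNReal.ofReal (r ^ K) := Finset.sum_le_sum hterm
    _ = (𝒮.card : ℝ≥0∞) * ENNReal.ofReal (r ^ K) := by
        rw [Finset.sum_const, nsmul_eq_mul]
    _ ≤ ((2^K : ℕ) : ℝ≥0∞) * ENNReal.ofReal (r ^ K) := by
        apply mul_le_mul_left
        exact_mod_cast le_trans (Finset.card_filter_le _ _)
          (le_of_eq (by rw [Finset.card_univ, Fintype.card_finset, Fintype.card_fin]))
    _ = ENNReal.ofReal (Real.exp (-(2 * K * t^2))) := by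
        rw [← ENNReal.ofReal_natCast, ← ENNReal.ofReal_mul (by positivity)]
        congr 1
        push_cast
        rw [hr, ← mul_pow]
        rw [show (2:ℝ) * (Real.exp (-(2 * t^2)) / 2) = Real.exp (-(2*t^2)) by ring,
          ← Real.exp_nat_mul]
        congr 1
        push_cast
        ring

lemma sepLem {m : ℕ} {X : Set (Fin m → ℝ)} (hcv : Convex ℝ X) {x0 z x : Fin m → ℝ}
    (hx0 : x0 ∈ X) (hx : x ∈ X)
    (hmin : ∀ y ∈ X, (x0 - z) ⬝ᵥ (x0 - z) ≤ (y - z) ⬝ᵥ (y - z)) :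
    0 ≤ (x0 - z) ⬝ᵥ (x - x0) := by
  by_contra hcon
  push_neg at hcon
  have hUnn : 0 ≤ (x - x0) ⬝ᵥ (x - x0) := by
    have : (x - x0) ⬝ᵥ (x - x0) = ∑ i, (x - x0) i * (x - x0) i := rfl
    rw [this]; exact Finset.sum_nonneg fun i _ => mul_self_nonneg _
  have hUne : (x - x0) ⬝ᵥ (x - x0) ≠ 0 := by
    intro h0
    have hu0 : x - x0 = 0 := dotProduct_self_eq_zero.mp h0
    rw [hu0, dotProduct_zero] at hcon
    exact lt_irrefl _ hcon
  have hUpos : 0 < (x - x0) ⬝ᵥ (x - x0) := lt_of_le_of_ne hUnn (Ne.symm hUne)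
  set θ : ℝ := min 1 (-(((x0 - z) ⬝ᵥ (x - x0))) / ((x - x0) ⬝ᵥ (x - x0))) with hθdef
  have hθpos : 0 < θ := lt_min one_pos (div_pos (by linarith) hUpos)
  have hθ1 : θ ≤ 1 := min_le_left _ _
  have hθU : θ * ((x - x0) ⬝ᵥ (x - x0)) ≤ -((x0 - z) ⬝ᵥ (x - x0)) := by
    calc θ * ((x - x0) ⬝ᵥ (x - x0))
        ≤ (-(((x0 - z) ⬝ᵥ (x - x0))) / ((x - x0) ⬝ᵥ (x - x0))) * ((x - x0) ⬝ᵥ (x - x0)) :=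
          mul_le_mul_of_nonneg_right (min_le_right _ _) hUnn
      _ = -((x0 - z) ⬝ᵥ (x - x0)) := div_mul_cancel₀ _ hUne
  have hyX : x0 + θ • (x - x0) ∈ X := by
    have hcomb := hcv hx0 hx (by linarith : (0:ℝ) ≤ 1 - θ) (le_of_lt hθpos)
      (by ring : (1 - θ) + θ = 1)
    have : (1 - θ) • x0 + θ • x = x0 + θ • (x - x0) := by
      ext i
      simp only [Pi.add_apply, Pi.smul_apply, Pi.sub_apply, smul_eq_mul]
      ring
    rwa [this] at hcomb
  have hm := hmin _ hyX
  have hexp : (x0 + θ • (x - x0) - z) ⬝ᵥ (x0 + θ • (x - x0) - z)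
      = (x0 - z) ⬝ᵥ (x0 - z) + 2 * θ * ((x0 - z) ⬝ᵥ (x - x0))
        + θ^2 * ((x - x0) ⬝ᵥ (x - x0)) := by
    have e : x0 + θ • (x - x0) - z = (x0 - z) + θ • (x - x0) := by
      ext i
      simp only [Pi.add_apply, Pi.smul_apply, Pi.sub_apply, smul_eq_mul]
      ring
    rw [e]
    simp only [add_dotProduct, dotProduct_add, smul_dotProduct, dotProduct_smul,
      dotProduct_comm (x - x0) (x0 - z), smul_eq_mul]
    ring
  rw [hexp] at hm
  nlinarith [mul_le_mul_of_nonneg_left hθU (le_of_lt hθpos)]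

lemma tailLe' (γ : ℝ → ℝ) (hγint : (∫ s, γ s) = 1)
    (hγeven : ∀ s, γ (-s) = γ s) {b δ : ℝ} (hδ : 0 ≤ δ)
    (hlowδ : b ≤ ∫ s in Set.Icc 0 δ, γ s) : tailP γ δ ≤ 1/2 - b := by
  have hInt : Integrable γ := integrable_of_integral_eq_one hγint
  have heq : ∫ s in Set.Iic (0:ℝ), γ s = ∫ s in Set.Ioi (0:ℝ), γ s := by
    have h1 := integral_comp_neg_Ioi (c := (0:ℝ)) (f := γ)
    simp only [neg_zero] at h1
    rw [← h1]
    exact setIntegral_congr_fun measurableSet_Ioi fun s _ => (hγeven s)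
  have hIoi : ∫ s in Set.Ioi (0:ℝ), γ s = 1/2 := by
    have h2 := integral_add_compl (measurableSet_Iic (a := (0:ℝ))) hInt (f := γ)
    rw [Set.compl_Iic, heq, hγint] at h2
    linarith
  have hsplit : (∫ s in Set.Ioc (0:ℝ) δ, γ s) + ∫ s in Set.Ioi δ, γ s
      = ∫ s in Set.Ioi (0:ℝ), γ s := by
    rw [← Set.Ioc_union_Ioi_eq_Ioi hδ]
    exact (setIntegral_union (Set.Ioc_disjoint_Ioi le_rfl) measurableSet_Ioi
      hInt.integrableOn hInt.integrableOn).symm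
  have hIcc : ∫ s in Set.Ioc (0:ℝ) δ, γ s = ∫ s in Set.Icc 0 δ, γ s :=
    setIntegral_congr_set Ioc_ae_eq_Icc
  have hIci : tailP γ δ = ∫ s in Set.Ioi δ, γ s :=
    (setIntegral_congr_set Ioi_ae_eq_Ici).symm
  rw [hIci]
  rw [hIcc] at hsplit
  linarith

end Aux

/-- under the conditions `βd̄ ≤ ½`, `∫_0^δ γ ≥ βδ` for `0 ≤ δ ≤ d̄`, and
`δ ≤ d̄`, the risk of the `K`-observation majority test is at most `exp(−2Kβ²δ²)`;
in particular for `ε ∈ (0,1)` and `K ≥ ⌈ln(1/ε)/(2β²δ²)⌉` the risk is at most `ε`. -/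
theorem statement10 {n K : ℕ} (γ : ℝ → ℝ) (hγ : IsSpec γ)
    (β dbar : ℝ) (hβ : 0 < β) (hdbar : 0 < dbar)
    (hβd : β * dbar ≤ 1 / 2)
    (hlow : ∀ d : ℝ, 0 ≤ d → d ≤ dbar → β * d ≤ ∫ s in Set.Icc 0 d, γ s)
    (X₁ X₂ : Set (Fin n → ℝ))
    (hne1 : X₁.Nonempty) (hne2 : X₂.Nonempty)
    (hcv1 : Convex ℝ X₁) (hcv2 : Convex ℝ X₂)
    (hcl1 : IsClosed X₁) (hcl2 : IsClosed X₂)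
    (hbd : Bornology.IsBounded X₁ ∨ Bornology.IsBounded X₂)
    (hdisj : Disjoint X₁ X₂)
    (x1 x2 : Fin n → ℝ) (hx1 : x1 ∈ X₁) (hx2 : x2 ∈ X₂)
    (hmin : ∀ y1 ∈ X₁, ∀ y2 ∈ X₂,
      (x1 - x2) ⬝ᵥ (x1 - x2) ≤ (y1 - y2) ⬝ᵥ (y1 - y2))
    (δ : ℝ) (hδ : δ = Real.sqrt ((x1 - x2) ⬝ᵥ (x1 - x2)) / 2)
    (hδd : δ ≤ dbar)
    (h : Fin n → ℝ) (hh : h = (Real.sqrt ((x1 - x2) ⬝ᵥ (x1 - x2)))⁻¹ • (x1 - x2))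
    (c : ℝ) (hc : c = h ⬝ᵥ (x1 + x2) / 2) :
    ((∀ x ∈ X₁, ∀ p : (Fin n → ℝ) → ℝ, SubSpherical γ p →
      (Measure.pi fun _ : Fin K => dMeas p)
        {ξ : Fin K → Fin n → ℝ |
          ¬ K ≤ 2 * (Finset.univ.filter fun k : Fin K => 0 ≤ h ⬝ᵥ (x + ξ k) - c).card}
        ≤ ENNReal.ofReal (Real.exp (-(2 * K * β ^ 2 * δ ^ 2)))) ∧
     (∀ x ∈ X₂, ∀ p : (Fin n → ℝ) → ℝ, SubSpherical γ p →
      (Measure.pi fun _ : Fin K => dMeas p)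
        {ξ : Fin K → Fin n → ℝ |
          K ≤ 2 * (Finset.univ.filter fun k : Fin K => 0 ≤ h ⬝ᵥ (x + ξ k) - c).card}
        ≤ ENNReal.ofReal (Real.exp (-(2 * K * β ^ 2 * δ ^ 2))))) ∧
    (∀ ε : ℝ, 0 < ε → ε < 1 →
      ⌈Real.log (1 / ε) / (2 * β ^ 2 * δ ^ 2)⌉₊ ≤ K →
      (∀ x ∈ X₁, ∀ p : (Fin n → ℝ) → ℝ, SubSpherical γ p →
        (Measure.pi fun _ : Fin K => dMeas p)
          {ξ : Fin K → Fin n → ℝ |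
            ¬ K ≤ 2 * (Finset.univ.filter fun k : Fin K => 0 ≤ h ⬝ᵥ (x + ξ k) - c).card}
          ≤ ENNReal.ofReal ε) ∧
      (∀ x ∈ X₂, ∀ p : (Fin n → ℝ) → ℝ, SubSpherical γ p →
        (Measure.pi fun _ : Fin K => dMeas p)
          {ξ : Fin K → Fin n → ℝ |
            K ≤ 2 * (Finset.univ.filter fun k : Fin K => 0 ≤ h ⬝ᵥ (x + ξ k) - c).card}
          ≤ ENNReal.ofReal ε)) := by

  classical
  obtain ⟨⟨hγ0, hγint⟩, hγeven, -⟩ := hγ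
  -- geometry
  have hx12 : x1 ≠ x2 := fun hE => Set.disjoint_left.mp hdisj hx1 (hE ▸ hx2)
  have hWnn : 0 ≤ (x1 - x2) ⬝ᵥ (x1 - x2) := by
    have e : (x1 - x2) ⬝ᵥ (x1 - x2) = ∑ i, (x1 - x2) i * (x1 - x2) i := rfl
    rw [e]; exact Finset.sum_nonneg fun i _ => mul_self_nonneg _
  have hWne : (x1 - x2) ⬝ᵥ (x1 - x2) ≠ 0 := by
    intro h0
    exact hx12 (sub_eq_zero.mp (dotProduct_self_eq_zero.mp h0))
  have hWpos : 0 < (x1 - x2) ⬝ᵥ (x1 - x2) := lt_of_le_of_ne hWnn (Ne.symm hWne)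
  have hnw : 0 < Real.sqrt ((x1 - x2) ⬝ᵥ (x1 - x2)) := Real.sqrt_pos.mpr hWpos
  have hWsq : Real.sqrt ((x1 - x2) ⬝ᵥ (x1 - x2)) * Real.sqrt ((x1 - x2) ⬝ᵥ (x1 - x2))
      = (x1 - x2) ⬝ᵥ (x1 - x2) := Real.mul_self_sqrt hWnn
  have hinv : 0 ≤ (Real.sqrt ((x1 - x2) ⬝ᵥ (x1 - x2)))⁻¹ := inv_nonneg.mpr (le_of_lt hnw)
  have hδpos : 0 < δ := by rw [hδ]; linarith
  have hδnn : 0 ≤ δ := le_of_lt hδpos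
  have hβδ : β * δ ≤ 1/2 := le_trans (by nlinarith) hβd
  have hβδnn : 0 ≤ β * δ := by positivity
  have hdot : ∀ y, h ⬝ᵥ y = (Real.sqrt ((x1 - x2) ⬝ᵥ (x1 - x2)))⁻¹ * ((x1 - x2) ⬝ᵥ y) := by
    intro y; rw [hh, smul_dotProduct, smul_eq_mul]
  have hgen1 : ∀ a : ℝ, 0 < a → a⁻¹ * (a⁻¹ * (a * a)) = 1 := by
    intro a ha; field_simp
  have hgen2 : ∀ a : ℝ, 0 < a → a⁻¹ * ((a * a) / 2) = a / 2 := by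
    intro a ha; field_simp
  have hhh : h ⬝ᵥ h = 1 := by
    have h2 : (Real.sqrt ((x1 - x2) ⬝ᵥ (x1 - x2)))⁻¹ *
        ((Real.sqrt ((x1 - x2) ⬝ᵥ (x1 - x2)))⁻¹ *
          (Real.sqrt ((x1 - x2) ⬝ᵥ (x1 - x2)) * Real.sqrt ((x1 - x2) ⬝ᵥ (x1 - x2)))) = 1 :=
      hgen1 _ hnw
    rw [hWsq] at h2
    rw [hdot, hh, dotProduct_smul, smul_eq_mul]
    exact h2
  have hstep : δ = (Real.sqrt ((x1 - x2) ⬝ᵥ (x1 - x2)))⁻¹ * (((x1 - x2) ⬝ᵥ (x1 - x2)) / 2) := by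
    have h2 : (Real.sqrt ((x1 - x2) ⬝ᵥ (x1 - x2)))⁻¹ *
        ((Real.sqrt ((x1 - x2) ⬝ᵥ (x1 - x2)) * Real.sqrt ((x1 - x2) ⬝ᵥ (x1 - x2))) / 2)
        = Real.sqrt ((x1 - x2) ⬝ᵥ (x1 - x2)) / 2 :=
      hgen2 _ hnw
    rw [hWsq] at h2
    rw [hδ]
    exact h2.symm
  -- separation inequalities
  have key1 : ∀ x ∈ X₁, δ ≤ h ⬝ᵥ x - c := by
    intro x hx
    have hsep : 0 ≤ (x1 - x2) ⬝ᵥ (x - x1) :=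
      sepLem hcv1 hx1 hx (fun y hy => hmin y hy x2 hx2)
    have ekey : (x1 - x2) ⬝ᵥ x - ((x1 - x2) ⬝ᵥ (x1 + x2)) / 2
        = (x1 - x2) ⬝ᵥ (x - x1) + ((x1 - x2) ⬝ᵥ (x1 - x2)) / 2 := by
      simp only [sub_dotProduct, dotProduct_sub, dotProduct_add]
      ring
    calc δ = (Real.sqrt ((x1 - x2) ⬝ᵥ (x1 - x2)))⁻¹ * (((x1 - x2) ⬝ᵥ (x1 - x2)) / 2) := hstep
      _ ≤ (Real.sqrt ((x1 - x2) ⬝ᵥ (x1 - x2)))⁻¹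
          * ((x1 - x2) ⬝ᵥ (x - x1) + ((x1 - x2) ⬝ᵥ (x1 - x2)) / 2) :=
        mul_le_mul_of_nonneg_left (by linarith) hinv
      _ = (Real.sqrt ((x1 - x2) ⬝ᵥ (x1 - x2)))⁻¹
          * ((x1 - x2) ⬝ᵥ x - ((x1 - x2) ⬝ᵥ (x1 + x2)) / 2) := by rw [ekey]
      _ = h ⬝ᵥ x - c := by rw [hc, hdot, hdot]; ring
  have key2 : ∀ x ∈ X₂, h ⬝ᵥ x - c ≤ -δ := by
    intro x hx
    have hflip : ∀ u v : Fin n → ℝ, (u - v) ⬝ᵥ (u - v) = (v - u) ⬝ᵥ (v - u) := by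
      intro u v
      rw [← neg_sub u v, neg_dotProduct, dotProduct_neg, neg_neg]
    have hsep : 0 ≤ (x2 - x1) ⬝ᵥ (x - x2) := by
      apply sepLem hcv2 hx2 hx
      intro y hy
      have := hmin x1 hx1 y hy
      rw [hflip x1 x2, hflip x1 y] at this
      exact this
    have hsep' : (x1 - x2) ⬝ᵥ (x - x2) ≤ 0 := by
      have : (x1 - x2) ⬝ᵥ (x - x2) = -((x2 - x1) ⬝ᵥ (x - x2)) := by
        rw [← neg_sub x2 x1, neg_dotProduct]
      rw [this]; linarith
    have ekey : (x1 - x2) ⬝ᵥ x - ((x1 - x2) ⬝ᵥ (x1 + x2)) / 2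
        = (x1 - x2) ⬝ᵥ (x - x2) - ((x1 - x2) ⬝ᵥ (x1 - x2)) / 2 := by
      simp only [sub_dotProduct, dotProduct_sub, dotProduct_add]
      ring
    calc h ⬝ᵥ x - c
        = (Real.sqrt ((x1 - x2) ⬝ᵥ (x1 - x2)))⁻¹
          * ((x1 - x2) ⬝ᵥ x - ((x1 - x2) ⬝ᵥ (x1 + x2)) / 2) := by rw [hc, hdot, hdot]; ring
      _ = (Real.sqrt ((x1 - x2) ⬝ᵥ (x1 - x2)))⁻¹
          * ((x1 - x2) ⬝ᵥ (x - x2) - ((x1 - x2) ⬝ᵥ (x1 - x2)) / 2) := by rw [ekey]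
      _ ≤ (Real.sqrt ((x1 - x2) ⬝ᵥ (x1 - x2)))⁻¹
          * (-(((x1 - x2) ⬝ᵥ (x1 - x2)) / 2)) :=
        mul_le_mul_of_nonneg_left (by linarith) hinv
      _ = -δ := by rw [hstep]; ring
  -- γ tail bound
  have htail : tailP γ δ ≤ 1/2 - β * δ :=
    tailLe' γ hγint hγeven hδnn (hlow δ hδnn hδd)
  -- measurability of linear functionals
  have hmeasdot : ∀ e : Fin n → ℝ, Measurable fun ξ : Fin n → ℝ => e ⬝ᵥ ξ := by
    intro e
    have : (fun ξ : Fin n → ℝ => e ⬝ᵥ ξ) = fun ξ => ∑ i, e i * ξ i := rfl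
    rw [this]
    exact Finset.measurable_sum _ fun i _ => (measurable_pi_apply i).const_mul _
  -- per-density facts
  have perDensity : ∀ p : (Fin n → ℝ) → ℝ, SubSpherical γ p →
      IsProbabilityMeasure (dMeas p) ∧
      (∀ e : Fin n → ℝ, e ⬝ᵥ e = 1 →
        dMeas p {ξ | δ ≤ e ⬝ᵥ ξ} ≤ ENNReal.ofReal (1/2 - β * δ)) := by
    intro p hp
    obtain ⟨⟨hp0, hpint⟩, hpeven, hptail⟩ := hp
    have hpInt : Integrable p := integrable_of_integral_eq_one hpint
    have hprob : IsProbabilityMeasure (dMeas p) := by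
      constructor
      rw [dMeas, withDensity_apply _ MeasurableSet.univ, Measure.restrict_univ,
        ← ofReal_integral_eq_lintegral_ofReal hpInt (ae_of_all _ hp0), hpint,
        ENNReal.ofReal_one]
    refine ⟨hprob, fun e he => ?_⟩
    have hHmeas : MeasurableSet {ξ : Fin n → ℝ | δ ≤ e ⬝ᵥ ξ} :=
      (hmeasdot e) measurableSet_Ici
    rw [dMeas, withDensity_apply _ hHmeas,
      ← ofReal_integral_eq_lintegral_ofReal hpInt.integrableOn (ae_of_all _ hp0)]
    exact ENNReal.ofReal_le_ofReal (le_trans (hptail e he δ hδnn) htail)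
  -- main risk bound
  have hmain : (∀ x ∈ X₁, ∀ p : (Fin n → ℝ) → ℝ, SubSpherical γ p →
      (Measure.pi fun _ : Fin K => dMeas p)
        {ξ : Fin K → Fin n → ℝ |
          ¬ K ≤ 2 * (Finset.univ.filter fun k : Fin K => 0 ≤ h ⬝ᵥ (x + ξ k) - c).card}
        ≤ ENNReal.ofReal (Real.exp (-(2 * K * β ^ 2 * δ ^ 2)))) ∧
     (∀ x ∈ X₂, ∀ p : (Fin n → ℝ) → ℝ, SubSpherical γ p →
      (Measure.pi fun _ : Fin K => dMeas p)
        {ξ : Fin K → Fin n → ℝ |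
          K ≤ 2 * (Finset.univ.filter fun k : Fin K => 0 ≤ h ⬝ᵥ (x + ξ k) - c).card}
        ≤ ENNReal.ofReal (Real.exp (-(2 * K * β ^ 2 * δ ^ 2)))) := by
    have hexpEq : Real.exp (-(2 * K * (β * δ) ^ 2)) = Real.exp (-(2 * K * β ^ 2 * δ ^ 2)) := by
      congr 1; ring
    constructor
    · intro x hx p hp
      obtain ⟨hprob, hhalf⟩ := perDensity p hp
      haveI := hprob
      set B : Set (Fin n → ℝ) := {ζ | ¬ 0 ≤ h ⬝ᵥ (x + ζ) - c} with hB
      have hBmeas : MeasurableSet B := by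
        have : B = {ζ : Fin n → ℝ | 0 ≤ h ⬝ᵥ (x + ζ) - c}ᶜ := by
          ext ζ; simp [hB]
        rw [this]
        apply MeasurableSet.compl
        have e : {ζ : Fin n → ℝ | 0 ≤ h ⬝ᵥ (x + ζ) - c}
            = (fun ζ : Fin n → ℝ => h ⬝ᵥ (x + ζ) - c) ⁻¹' Set.Ici 0 := rfl
        rw [e]
        exact (((hmeasdot h).comp (measurable_const.add measurable_id)).sub measurable_const)
          measurableSet_Ici
      have hBsub : B ⊆ {ζ : Fin n → ℝ | δ ≤ (-h) ⬝ᵥ ζ} := by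
        intro ζ hζ
        simp only [hB, Set.mem_setOf_eq, not_le] at hζ
        have h1 := key1 x hx
        rw [dotProduct_add] at hζ
        simp only [Set.mem_setOf_eq, neg_dotProduct]
        linarith
      have hBbound : dMeas p B ≤ ENNReal.ofReal (1/2 - β * δ) := by
        refine le_trans (measure_mono hBsub) (hhalf (-h) ?_)
        rw [neg_dotProduct, dotProduct_neg, neg_neg]
        exact hhh
      refine le_trans (measure_mono ?_) (le_trans
        (masterBound' (dMeas p) K B hBmeas (β * δ) hβδnn hβδ hBbound) (le_of_eq (by rw [hexpEq])))
      intro ξ hξ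
      simp only [Set.mem_setOf_eq] at hξ ⊢
      have haux : ∀ s : Finset (Fin K),
          (∀ k, k ∈ s ↔ ¬ 0 ≤ h ⬝ᵥ (x + ξ k) - c) → K ≤ 2 * s.card := by
        intro s hs
        have hcompl : s = (Finset.univ.filter fun k : Fin K => 0 ≤ h ⬝ᵥ (x + ξ k) - c)ᶜ := by
          ext k
          simp only [hs k, Finset.mem_compl, Finset.mem_filter, Finset.mem_univ, true_and]
        rw [hcompl, Finset.card_compl, Fintype.card_fin]
        have hle := Finset.card_filter_le (Finset.univ : Finset (Fin K))
          (fun k : Fin K => 0 ≤ h ⬝ᵥ (x + ξ k) - c)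
        simp only [Finset.card_univ, Fintype.card_fin] at hle
        omega
      exact haux _ (fun k => by simp [hB])
    · intro x hx p hp
      obtain ⟨hprob, hhalf⟩ := perDensity p hp
      haveI := hprob
      set B : Set (Fin n → ℝ) := {ζ | 0 ≤ h ⬝ᵥ (x + ζ) - c} with hB
      have hBmeas : MeasurableSet B := by
        have e : B = (fun ζ : Fin n → ℝ => h ⬝ᵥ (x + ζ) - c) ⁻¹' Set.Ici 0 := rfl
        rw [e]
        exact (((hmeasdot h).comp (measurable_const.add measurable_id)).sub measurable_const)
          measurableSet_Ici
      have hBsub : B ⊆ {ζ : Fin n → ℝ | δ ≤ h ⬝ᵥ ζ} := by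
        intro ζ hζ
        simp only [hB, Set.mem_setOf_eq] at hζ
        have h2 := key2 x hx
        rw [dotProduct_add] at hζ
        simp only [Set.mem_setOf_eq]
        linarith
      have hBbound : dMeas p B ≤ ENNReal.ofReal (1/2 - β * δ) :=
        le_trans (measure_mono hBsub) (hhalf h hhh)
      refine le_trans (measure_mono ?_) (le_trans
        (masterBound' (dMeas p) K B hBmeas (β * δ) hβδnn hβδ hBbound) (le_of_eq (by rw [hexpEq])))
      intro ξ hξ
      simp only [Set.mem_setOf_eq] at hξ ⊢
      have haux : ∀ s : Finset (Fin K),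
          (∀ k, k ∈ s ↔ 0 ≤ h ⬝ᵥ (x + ξ k) - c) → K ≤ 2 * s.card := by
        intro s hs
        have hfil : s = Finset.univ.filter fun k : Fin K => 0 ≤ h ⬝ᵥ (x + ξ k) - c := by
          ext k
          simp only [hs k, Finset.mem_filter, Finset.mem_univ, true_and]
        rw [hfil]
        exact hξ
      exact haux _ (fun k => by simp [hB])
  refine ⟨hmain, fun ε hε0 hε1 hK => ?_⟩
  have hden : 0 < 2 * β ^ 2 * δ ^ 2 := by positivity
  have hKge : Real.log (1 / ε) / (2 * β ^ 2 * δ ^ 2) ≤ (K : ℝ) := by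
    exact_mod_cast Nat.ceil_le.mp hK
  have hlog : Real.log (1 / ε) ≤ (K : ℝ) * (2 * β ^ 2 * δ ^ 2) := by
    rw [div_le_iff₀ hden] at hKge
    exact hKge
  have hexple : Real.exp (-(2 * K * β ^ 2 * δ ^ 2)) ≤ ε := by
    rw [one_div, Real.log_inv] at hlog
    calc Real.exp (-(2 * K * β ^ 2 * δ ^ 2)) ≤ Real.exp (Real.log ε) := by
          apply Real.exp_le_exp.mpr; nlinarith
      _ = ε := Real.exp_log hε0
  have hofle : ENNReal.ofReal (Real.exp (-(2 * K * β ^ 2 * δ ^ 2))) ≤ ENNReal.ofReal ε :=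
    ENNReal.ofReal_le_ofReal hexple
  exact ⟨fun x hx p hp => le_trans (hmain.1 x hx p hp) hofle,
    fun x hx p hp => le_trans (hmain.2 x hx p hp) hofle⟩
end
end

section
/- Let P be a family of probability densities on ℝⁿ, let X₁, X₂ ⊂ ℝⁿ be nonempty closed convex disjoint sets with at least one bounded, let (x¹*, x²*) minimize ‖x¹ − x²‖₂ over X₁ × X₂ and δ = ½‖x¹* − x²*‖₂. Suppose α > 0 and P contains a density q such that ∫_{ℝⁿ} √(q(ξ − e) q(ξ + e)) dξ ≥ exp{−α e·e} for all e with ‖e‖₂ ≤ δ. Let 0 < ε < 1/4 and let T_K be any test which, from K observations ω_k = x + ξ_k (k = 1, …, K) with ξ_k i.i.d. ∼ p ∈ P, decides on H₁ : x ∈ X₁ vs. H₂ : x ∈ X₂ with risk at most ε (i.e., for each χ ∈ {1,2}, sup_{x ∈ X_χ, p ∈ P} Prob{T_K rejects H_χ} ≤ ε). Then K ≥ ln(1/(4ε))/(2αδ²). -/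
open MeasureTheory Matrix
open scoped Classical

noncomputable section

/-! The Hellinger affinity `∫ √(p₁ p₂)` of two probability densities is at most
`√(P₁ A) + √(P₂ Aᶜ)` for every set `A` (Cauchy–Schwarz on `A` and on `Aᶜ`), and it is
multiplicative under products. The laws of `K` observations at the closest points `x1`, `x2`
are translates of `q^⊗K`, with one-observation affinity `∫ √(q(ξ - e) q(ξ + e)) ≥ exp(-α δ²)`
for `e = (x1 - x2)/2`. Taking for `A` the rejection region of `H₁`, this gives
`exp(-α δ²)^K ≤ 2 √ε`, and the bound on `K` follows by taking logarithms. -/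

open scoped ENNReal

section MeasureTheory

variable {α : Type*} [MeasurableSpace α]

lemma ofReal_integral_le_lintegral_ofReal {μ : Measure α} {f : α → ℝ} (hf : 0 ≤ᵐ[μ] f) :
    ENNReal.ofReal (∫ x, f x ∂μ) ≤ ∫⁻ x, ENNReal.ofReal (f x) ∂μ := by
  by_cases hint : Integrable f μ
  · exact (ofReal_integral_eq_lintegral_ofReal hint hf).le
  · simp [integral_undef hint]

lemma lintegral_fin_prod_eq_prod {K : ℕ} (μ : Measure α) [SigmaFinite μ]
    {f : Fin K → α → ℝ≥0∞} (hf : ∀ i, Measurable (f i)) :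
    ∫⁻ x, ∏ i, f i (x i) ∂(Measure.pi fun _ => μ) = ∏ i, ∫⁻ a, f i a ∂μ := by
  induction K with
  | zero => simp
  | succ K ih =>
    rw [← ((measurePreserving_piFinSuccAbove (fun _ : Fin (K + 1) => μ) 0).symm
      ).lintegral_comp_emb (MeasurableEquiv.measurableEmbedding _)]
    simp only [MeasurableEquiv.piFinSuccAbove_symm_apply, Fin.insertNthEquiv,
      Fin.prod_univ_succ, Fin.insertNth_zero, Equiv.coe_fn_mk, Fin.cons_zero, Fin.cons_succ,
      cast_eq]
    have hg : Measurable fun y : Fin K → α => ∏ i, f i.succ (y i) :=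
      Finset.measurable_prod _ fun i _ => (hf i.succ).comp (measurable_pi_apply i)
    rw [lintegral_prod_mul (hf 0).aemeasurable hg.aemeasurable, ih fun i => hf i.succ]

lemma pi_withDensity {K : ℕ} {μ : Measure α} [SigmaFinite μ] {f : α → ℝ≥0∞} (hf : Measurable f)
    [SigmaFinite (μ.withDensity f)] :
    Measure.pi (fun _ : Fin K => μ.withDensity f)
      = (Measure.pi fun _ => μ).withDensity fun x => ∏ i, f (x i) := by
  refine Measure.pi_eq fun s hs => ?_
  have hbox : (Set.univ.pi s).indicator (fun x => ∏ i, f (x i))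
      = fun x => ∏ i, (s i).indicator f (x i) := by
    funext x
    simp only [Set.indicator_apply, Set.mem_univ_pi, Fintype.prod_ite_zero]
    congr
  rw [withDensity_apply _ (.univ_pi hs), ← lintegral_indicator (.univ_pi hs), hbox,
    lintegral_fin_prod_eq_prod μ fun i => hf.indicator (hs i)]
  simp_rw [lintegral_indicator (hs _), withDensity_apply _ (hs _)]

lemma map_add_left_withDensity {G : Type*} [MeasurableSpace G] [AddGroup G] [MeasurableAdd G]
    (μ : Measure G) [μ.IsAddLeftInvariant] (a : G) (g : G → ℝ≥0∞) :
    (μ.withDensity g).map (a + ·) = μ.withDensity fun x => g (-a + x) := by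
  ext s hs
  rw [Measure.map_apply (measurable_const_add a) hs,
    withDensity_apply _ (hs.preimage (measurable_const_add a)), withDensity_apply _ hs,
    ← (measurePreserving_add_left μ a).setLIntegral_comp_preimage_emb
      (measurableEmbedding_addLeft a) (fun x => g (-a + x))]
  simp_rw [neg_add_cancel_left]

/-- The Hellinger affinity of the measures `μ.withDensity f` and `μ.withDensity g`. -/
def hellingerAffinity (μ : Measure α) (f g : α → ℝ≥0∞) : ℝ≥0∞ :=
  ∫⁻ x, (f x * g x) ^ (1 / 2 : ℝ) ∂μ

lemma hellingerAffinity_pi {K : ℕ} {μ : Measure α} [SigmaFinite μ] {f g : α → ℝ≥0∞}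
    (hf : Measurable f) (hg : Measurable g) :
    hellingerAffinity (Measure.pi fun _ : Fin K => μ) (fun x => ∏ i, f (x i))
      (fun x => ∏ i, g (x i)) = hellingerAffinity μ f g ^ K := by
  simp_rw [hellingerAffinity, ← Finset.prod_mul_distrib,
    ← ENNReal.prod_rpow_of_nonneg (by norm_num : (0 : ℝ) ≤ 1 / 2)]
  rw [lintegral_fin_prod_eq_prod μ (f := fun _ x => (f x * g x) ^ (1 / 2 : ℝ))
    fun _ => (hf.mul hg).pow_const _, Finset.prod_const, Finset.card_univ, Fintype.card_fin]

lemma setLIntegral_rpow_half_mul_le {μ : Measure α} {f g : α → ℝ≥0∞} (hf : AEMeasurable f μ)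
    (hg : AEMeasurable g μ) {s : Set α} (hs : MeasurableSet s) :
    ∫⁻ x in s, (f x * g x) ^ (1 / 2 : ℝ) ∂μ
      ≤ μ.withDensity f s ^ (1 / 2 : ℝ) * μ.withDensity g s ^ (1 / 2 : ℝ) := by
  have hsq (y : ℝ≥0∞) : (y ^ (1 / 2 : ℝ)) ^ (2 : ℝ) = y := by
    rw [← ENNReal.rpow_mul]; norm_num
  have hCS := ENNReal.lintegral_mul_le_Lp_mul_Lq (μ.restrict s) Real.HolderConjugate.two_two
    (hf.restrict.pow_const (1 / 2 : ℝ)) (hg.restrict.pow_const (1 / 2 : ℝ))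
  simp only [Pi.mul_apply, hsq] at hCS
  simp_rw [withDensity_apply _ hs, ENNReal.mul_rpow_of_nonneg _ _ (by norm_num : (0 : ℝ) ≤ 1 / 2)]
  convert hCS using 3

lemma hellingerAffinity_le_rpow_add_rpow_compl {μ : Measure α} {f g : α → ℝ≥0∞}
    (hf : AEMeasurable f μ) (hg : AEMeasurable g μ) [IsProbabilityMeasure (μ.withDensity f)]
    [IsProbabilityMeasure (μ.withDensity g)] {A : Set α} (hA : MeasurableSet A) :
    hellingerAffinity μ f g
      ≤ μ.withDensity f A ^ (1 / 2 : ℝ) + μ.withDensity g Aᶜ ^ (1 / 2 : ℝ) := by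
  have hle_one {ν : Measure α} [IsProbabilityMeasure ν] (s : Set α) : ν s ^ (1 / 2 : ℝ) ≤ 1 :=
    ENNReal.rpow_le_one prob_le_one (by norm_num)
  calc hellingerAffinity μ f g
      = ∫⁻ x in A, (f x * g x) ^ (1 / 2 : ℝ) ∂μ + ∫⁻ x in Aᶜ, (f x * g x) ^ (1 / 2 : ℝ) ∂μ :=
        (lintegral_add_compl _ hA).symm
    _ ≤ μ.withDensity f A ^ (1 / 2 : ℝ) * μ.withDensity g A ^ (1 / 2 : ℝ)
        + μ.withDensity f Aᶜ ^ (1 / 2 : ℝ) * μ.withDensity g Aᶜ ^ (1 / 2 : ℝ) :=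
        add_le_add (setLIntegral_rpow_half_mul_le hf hg hA)
          (setLIntegral_rpow_half_mul_le hf hg hA.compl)
    _ ≤ μ.withDensity f A ^ (1 / 2 : ℝ) * 1 + 1 * μ.withDensity g Aᶜ ^ (1 / 2 : ℝ) := by
        gcongr <;> exact hle_one _
    _ = _ := by rw [mul_one, one_mul]

end MeasureTheory

section Translates

variable {G : Type*} [MeasurableSpace G] [AddGroup G] [MeasurableAdd G] {μ : Measure G}
  [SigmaFinite μ] [μ.IsAddLeftInvariant]

lemma map_pi_withDensity_add {K : ℕ} {f : G → ℝ≥0∞} (hf : Measurable f)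
    [SigmaFinite (μ.withDensity f)] (x : G) :
    (Measure.pi fun _ : Fin K => μ.withDensity f).map (fun ξ k => x + ξ k)
      = (Measure.pi fun _ => μ).withDensity fun ω => ∏ k, f (-x + ω k) := by
  rw [pi_withDensity hf]
  exact map_add_left_withDensity (Measure.pi fun _ => μ) (fun _ => x) _

lemma hellingerAffinity_pow_le_of_risk_le {K : ℕ} {f : G → ℝ≥0∞} (hf : Measurable f)
    [IsProbabilityMeasure (μ.withDensity f)] {T : (Fin K → G) → Bool} (hT : Measurable T)
    {x₁ x₂ : G} {ε : ℝ≥0∞}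
    (h₁ : Measure.pi (fun _ : Fin K => μ.withDensity f) {ξ | T (fun k => x₁ + ξ k) = false} ≤ ε)
    (h₂ : Measure.pi (fun _ : Fin K => μ.withDensity f) {ξ | T (fun k => x₂ + ξ k) = true} ≤ ε) :
    hellingerAffinity μ (fun y => f (-x₁ + y)) (fun y => f (-x₂ + y)) ^ K
      ≤ 2 * ε ^ (1 / 2 : ℝ) := by
  set ν : G → Measure (Fin K → G) :=
    fun x => (Measure.pi fun _ => μ).withDensity fun ω => ∏ k, f (-x + ω k)
  have htrans (x : G) : Measurable fun (ξ : Fin K → G) k => x + ξ k := by fun_prop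
  have hν (x : G) : ν x = (Measure.pi fun _ => μ.withDensity f).map (fun ξ k => x + ξ k) :=
    (map_pi_withDensity_add hf x).symm
  have hν_apply (x : G) {S : Set (Fin K → G)} (hS : MeasurableSet S) :
      ν x S = Measure.pi (fun _ => μ.withDensity f) ((fun ξ k => x + ξ k) ⁻¹' S) := by
    rw [hν, Measure.map_apply (htrans x) hS]
  have hprob (x : G) : IsProbabilityMeasure (ν x) := by
    rw [hν]; exact Measure.isProbabilityMeasure_map (htrans x).aemeasurable
  have hshift (x : G) : Measurable fun y => f (-x + y) := hf.comp (measurable_const_add _)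
  have hprod (x : G) : Measurable fun ω : Fin K → G => ∏ k, f (-x + ω k) :=
    Finset.measurable_prod _ fun k _ => (hshift x).comp (measurable_pi_apply k)
  have hA : MeasurableSet {ω | T ω = false} := hT (measurableSet_singleton false)
  have hAc : {ω | T ω = false}ᶜ = {ω | T ω = true} := by ext; simp
  rw [← hellingerAffinity_pi (hshift x₁) (hshift x₂)]
  calc _ ≤ ν x₁ {ω | T ω = false} ^ (1 / 2 : ℝ) + ν x₂ {ω | T ω = false}ᶜ ^ (1 / 2 : ℝ) :=
        hellingerAffinity_le_rpow_add_rpow_compl (hprod x₁).aemeasurable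
          (hprod x₂).aemeasurable hA
    _ ≤ ε ^ (1 / 2 : ℝ) + ε ^ (1 / 2 : ℝ) := by
        rw [hν_apply x₁ hA, hν_apply x₂ hA.compl, hAc]
        gcongr
        exacts [h₁, h₂]
    _ = 2 * ε ^ (1 / 2 : ℝ) := (two_mul _).symm

end Translates

lemma lintegral_ofReal_sqrt_translates_eq {G : Type*} [MeasurableSpace G] [AddGroup G]
    [MeasurableAdd G] {μ : Measure G} [μ.IsAddRightInvariant] {q : G → ℝ} (hq : ∀ x, 0 ≤ q x)
    {f : G → ℝ≥0∞} (hqf : (fun x => ENNReal.ofReal (q x)) =ᵐ[μ] f) (e : G) :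
    ∫⁻ ξ, ENNReal.ofReal (Real.sqrt (q (ξ - e) * q (ξ + e))) ∂μ
      = ∫⁻ ξ, (f (ξ - e) * f (ξ + e)) ^ (1 / 2 : ℝ) ∂μ := by
  have hsub := (measurePreserving_sub_right μ e).quasiMeasurePreserving.ae_eq_comp hqf
  have hadd := (measurePreserving_add_right μ e).quasiMeasurePreserving.ae_eq_comp hqf
  refine lintegral_congr_ae ?_
  filter_upwards [hsub, hadd] with ξ h₁ h₂
  simp only [Function.comp_apply] at h₁ h₂
  rw [← h₁, ← h₂, ← ENNReal.ofReal_mul (hq _), Real.sqrt_eq_rpow,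
    ENNReal.ofReal_rpow_of_nonneg (mul_nonneg (hq _) (hq _)) (by norm_num)]

lemma hellingerAffinity_translates_eq {E : Type*} [AddCommGroup E] [Module ℝ E]
    [MeasurableSpace E] [MeasurableAdd E] (μ : Measure E) [μ.IsAddRightInvariant]
    (f : E → ℝ≥0∞) (x₁ x₂ : E) :
    hellingerAffinity μ (fun y => f (-x₁ + y)) (fun y => f (-x₂ + y))
      = ∫⁻ ξ, (f (ξ - (1 / 2 : ℝ) • (x₁ - x₂)) * f (ξ + (1 / 2 : ℝ) • (x₁ - x₂))) ^ (1 / 2 : ℝ)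
          ∂μ := by
  rw [hellingerAffinity, ← lintegral_add_right_eq_self _ ((1 / 2 : ℝ) • (x₁ + x₂))]
  congr! 5 <;> module

lemma IsDensity.exists_measurable_ae_eq {n : ℕ} {q : (Fin n → ℝ) → ℝ} (hq : IsDensity q) :
    ∃ f : (Fin n → ℝ) → ℝ≥0∞, Measurable f ∧ (fun x => ENNReal.ofReal (q x)) =ᵐ[volume] f ∧
      IsProbabilityMeasure (volume.withDensity f) := by
  have hint : Integrable q := .of_integral_ne_zero (by rw [hq.2]; exact one_ne_zero)
  have hae : AEMeasurable fun x => ENNReal.ofReal (q x) := hint.aemeasurable.ennreal_ofReal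
  refine ⟨hae.mk _, hae.measurable_mk, hae.ae_eq_mk, ⟨?_⟩⟩
  rw [withDensity_apply _ .univ, Measure.restrict_univ, ← lintegral_congr_ae hae.ae_eq_mk,
    ← ofReal_integral_eq_lintegral_ofReal hint (ae_of_all _ hq.1), hq.2, ENNReal.ofReal_one]

lemma half_smul_dotProduct_self {n : ℕ} (v : Fin n → ℝ) :
    ((1 / 2 : ℝ) • v) ⬝ᵥ ((1 / 2 : ℝ) • v) = (Real.sqrt (v ⬝ᵥ v) / 2) ^ 2 := by
  have hv : 0 ≤ v ⬝ᵥ v := by simpa using dotProduct_self_star_nonneg v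
  rw [smul_dotProduct, dotProduct_smul, div_pow, Real.sq_sqrt hv, smul_eq_mul, smul_eq_mul]
  ring

lemma log_div_le_of_ofReal_exp_pow_le {c ε : ℝ} {K : ℕ} (hc : 0 ≤ c) (hε : 0 < ε)
    (h : ENNReal.ofReal (Real.exp (-c)) ^ K ≤ 2 * ENNReal.ofReal ε ^ (1 / 2 : ℝ)) :
    Real.log (1 / (4 * ε)) / (2 * c) ≤ K := by
  have hreal : Real.exp (-c) ^ K ≤ 2 * ε ^ (1 / 2 : ℝ) := by
    rwa [← ENNReal.ofReal_le_ofReal_iff (by positivity), ENNReal.ofReal_pow (by positivity),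
      ENNReal.ofReal_mul (by norm_num), ← ENNReal.ofReal_rpow_of_nonneg hε.le (by norm_num),
      ENNReal.ofReal_ofNat]
  have hlog := Real.log_le_log (by positivity) hreal
  rw [Real.log_pow, Real.log_exp, Real.log_mul two_ne_zero (by positivity),
    Real.log_rpow hε] at hlog
  have hlog4 : Real.log (1 / (4 * ε)) = -(2 * Real.log 2 + Real.log ε) := by
    rw [one_div, Real.log_inv, Real.log_mul (by norm_num) hε.ne',
      show (4 : ℝ) = 2 ^ 2 by norm_num, Real.log_pow, Nat.cast_ofNat]
  refine div_le_of_le_mul₀ (by positivity) K.cast_nonneg ?_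
  rw [hlog4]
  linarith

theorem statement11_general {n K : ℕ}
    (P : Set ((Fin n → ℝ) → ℝ)) (hP : ∀ p ∈ P, IsDensity p)
    (X₁ X₂ : Set (Fin n → ℝ))
    (x1 x2 : Fin n → ℝ) (hx1 : x1 ∈ X₁) (hx2 : x2 ∈ X₂)
    (δ : ℝ) (hδ : δ = Real.sqrt ((x1 - x2) ⬝ᵥ (x1 - x2)) / 2)
    (α : ℝ) (hα : 0 < α)
    (q : (Fin n → ℝ) → ℝ) (hqP : q ∈ P)
    (hq : ∀ e : Fin n → ℝ, Real.sqrt (e ⬝ᵥ e) ≤ δ →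
      Real.exp (-(α * (e ⬝ᵥ e))) ≤ ∫ ξ, Real.sqrt (q (ξ - e) * q (ξ + e)))
    (ε : ℝ) (hε0 : 0 < ε)
    (T : (Fin K → Fin n → ℝ) → Bool) (hT : Measurable T)
    (hrisk1 : ∀ x ∈ X₁, ∀ p ∈ P,
      (Measure.pi fun _ : Fin K => dMeas p)
        {ξ : Fin K → Fin n → ℝ | T (fun k => x + ξ k) = false} ≤ ENNReal.ofReal ε)
    (hrisk2 : ∀ x ∈ X₂, ∀ p ∈ P,
      (Measure.pi fun _ : Fin K => dMeas p)
        {ξ : Fin K → Fin n → ℝ | T (fun k => x + ξ k) = true} ≤ ENNReal.ofReal ε) :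
    Real.log (1 / (4 * ε)) / (2 * α * δ ^ 2) ≤ (K : ℝ) := by
  obtain ⟨f, hf, hqf, hprob⟩ := (hP q hqP).exists_measurable_ae_eq
  have hdMeas : dMeas q = volume.withDensity f := withDensity_congr_ae hqf
  set e : Fin n → ℝ := (1 / 2 : ℝ) • (x1 - x2)
  have hee : e ⬝ᵥ e = δ ^ 2 := by rw [hδ]; exact half_smul_dotProduct_self _
  have hδ0 : 0 ≤ δ := by rw [hδ]; positivity
  have haff : ENNReal.ofReal (Real.exp (-(α * δ ^ 2)))
      ≤ hellingerAffinity volume (fun y => f (-x1 + y)) (fun y => f (-x2 + y)) := by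
    rw [hellingerAffinity_translates_eq, ← lintegral_ofReal_sqrt_translates_eq (hP q hqP).1 hqf,
      ← hee]
    exact (ENNReal.ofReal_le_ofReal (hq e (by rw [hee, Real.sqrt_sq hδ0]))).trans
      (ofReal_integral_le_lintegral_ofReal (ae_of_all _ fun _ => Real.sqrt_nonneg _))
  have hrisk := hellingerAffinity_pow_le_of_risk_le hf hT
    (hdMeas ▸ hrisk1 x1 hx1 q hqP) (hdMeas ▸ hrisk2 x2 hx2 q hqP)
  rw [mul_assoc]
  exact log_div_le_of_ofReal_exp_pow_le (by positivity) hε0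
    ((pow_le_pow_left' haff K).trans hrisk)

/-- lower bound on the number of observations. If `P` contains a density `q`
with `∫ √(q(ξ−e)q(ξ+e)) dξ ≥ exp(−α e·e)` for `‖e‖₂ ≤ δ`, `0 < ε < 1/4`, and the
measurable `K`-observation test `T` (`true` = accept `H₁`) has both risks at most `ε`,
then `K ≥ ln(1/(4ε))/(2αδ²)`. -/
theorem statement11 {n K : ℕ}
    (P : Set ((Fin n → ℝ) → ℝ)) (hP : ∀ p ∈ P, IsDensity p)
    (X₁ X₂ : Set (Fin n → ℝ))
    (hne1 : X₁.Nonempty) (hne2 : X₂.Nonempty)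
    (hcv1 : Convex ℝ X₁) (hcv2 : Convex ℝ X₂)
    (hcl1 : IsClosed X₁) (hcl2 : IsClosed X₂)
    (hbd : Bornology.IsBounded X₁ ∨ Bornology.IsBounded X₂)
    (hdisj : Disjoint X₁ X₂)
    (x1 x2 : Fin n → ℝ) (hx1 : x1 ∈ X₁) (hx2 : x2 ∈ X₂)
    (hmin : ∀ y1 ∈ X₁, ∀ y2 ∈ X₂,
      (x1 - x2) ⬝ᵥ (x1 - x2) ≤ (y1 - y2) ⬝ᵥ (y1 - y2))
    (δ : ℝ) (hδ : δ = Real.sqrt ((x1 - x2) ⬝ᵥ (x1 - x2)) / 2)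
    (α : ℝ) (hα : 0 < α)
    (q : (Fin n → ℝ) → ℝ) (hqP : q ∈ P)
    (hq : ∀ e : Fin n → ℝ, Real.sqrt (e ⬝ᵥ e) ≤ δ →
      Real.exp (-(α * (e ⬝ᵥ e))) ≤ ∫ ξ, Real.sqrt (q (ξ - e) * q (ξ + e)))
    (ε : ℝ) (hε0 : 0 < ε) (hε : ε < 1 / 4)
    (T : (Fin K → Fin n → ℝ) → Bool) (hT : Measurable T)
    (hrisk1 : ∀ x ∈ X₁, ∀ p ∈ P,
      (Measure.pi fun _ : Fin K => dMeas p)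
        {ξ : Fin K → Fin n → ℝ | T (fun k => x + ξ k) = false} ≤ ENNReal.ofReal ε)
    (hrisk2 : ∀ x ∈ X₂, ∀ p ∈ P,
      (Measure.pi fun _ : Fin K => dMeas p)
        {ξ : Fin K → Fin n → ℝ | T (fun k => x + ξ k) = true} ≤ ENNReal.ofReal ε) :
    Real.log (1 / (4 * ε)) / (2 * α * δ ^ 2) ≤ (K : ℝ) :=
  statement11_general P hP X₁ X₂ x1 x2 hx1 hx2 δ hδ α hα q hqP hq ε hε0 T hT hrisk1 hrisk2
end
end
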